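/- arXiv:1811.12031 — 2 statements merged into one kernel-verified Lean document; each statement's English description precedes it below -/
import Mathlib

section
/- Let G be a connected graph on n ≥ 4 vertices with diameter 2 and clique number at most 3. Then: μ₅(G) = (1+√33)/2 if C₅ or S₄⁺ is an induced subgraph of G; μ₅(G) = (3+√17)/2 if neither C₅ nor S₄⁺ is an induced subgraph of G but K₄−e is; and μ₅(G) = 4 otherwise. -/
open Matrix SimpleGraph

/-- `x` is a (unit-normalizable) Pareto eigenvector of `A` associated with `lam`:
`x` is nonzero, entrywise nonnegative, `A x ≥ lam • x` entrywise, and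
`lam = xᵀAx / xᵀx`. -/
def IsParetoEigenpair {n : ℕ} (A : Matrix (Fin n) (Fin n) ℝ) (lam : ℝ) (x : Fin n → ℝ) : Prop :=
  x ≠ 0 ∧ (∀ i, 0 ≤ x i) ∧ (∀ i, lam * x i ≤ A.mulVec x i) ∧
    lam = (x ⬝ᵥ A.mulVec x) / (x ⬝ᵥ x)

/-- `lam` is a Pareto eigenvalue of `A`. -/
def IsParetoEigenvalue {n : ℕ} (A : Matrix (Fin n) (Fin n) ℝ) (lam : ℝ) : Prop :=
  ∃ x, IsParetoEigenpair A lam x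

/-- The distance matrix of a graph on `Fin n`, as a real matrix. -/
noncomputable def distMatrix {n : ℕ} (G : SimpleGraph (Fin n)) : Matrix (Fin n) (Fin n) ℝ :=
  fun i j => (G.dist i j : ℝ)

/-- The set `Π(G)` of distance Pareto eigenvalues of `G`. -/
def distParetoSet {n : ℕ} (G : SimpleGraph (Fin n)) : Set ℝ :=
  {lam | IsParetoEigenvalue (distMatrix G) lam}

/-- `a` is the `k`-th largest element of the (finite) set `S`. -/
def IsKthLargest (S : Set ℝ) (k : ℕ) (a : ℝ) : Prop :=
  a ∈ S ∧ {x ∈ S | a < x}.ncard = k - 1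

/-- `a` is the `k`-th smallest element of the (finite) set `S`. -/
def IsKthSmallest (S : Set ℝ) (k : ℕ) (a : ℝ) : Prop :=
  a ∈ S ∧ {x ∈ S | x < a}.ncard = k - 1

/-- The star graph `S_n` on `n` vertices: vertex `0` is adjacent to all others. -/
def starGraph (n : ℕ) : SimpleGraph (Fin n) where
  Adj i j := i ≠ j ∧ (i.val = 0 ∨ j.val = 0)
  symm := ⟨fun i j h => ⟨h.1.symm, h.2.symm⟩⟩
  loopless := ⟨fun i h => h.1 rfl⟩

/-- The graph `S_n⁺`: the star `S_n` plus one edge between the pendant vertices `1` and `2`. -/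
def starPlusGraph (n : ℕ) : SimpleGraph (Fin n) where
  Adj i j := i ≠ j ∧
    ((i.val = 0 ∨ j.val = 0) ∨ (i.val = 1 ∧ j.val = 2) ∨ (i.val = 2 ∧ j.val = 1))
  symm := ⟨fun i j h => ⟨h.1.symm, by tauto⟩⟩
  loopless := ⟨fun i h => h.1 rfl⟩

/-- The wheel graph `W_n` on `n` vertices: hub `0` joined to the cycle `1 - 2 - ⋯ - (n-1) - 1`. -/
def wheelGraph (n : ℕ) : SimpleGraph (Fin n) where
  Adj i j := i ≠ j ∧ (i.val = 0 ∨ j.val = 0 ∨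
    i.val + 1 = j.val ∨ j.val + 1 = i.val ∨
    (i.val = 1 ∧ j.val = n - 1) ∨ (j.val = 1 ∧ i.val = n - 1))
  symm := ⟨fun i j h => ⟨h.1.symm, by tauto⟩⟩
  loopless := ⟨fun i h => h.1 rfl⟩

/-- `K₄ - e`: the complete graph on 4 vertices minus the edge `{0,1}`. -/
def k4MinusE : SimpleGraph (Fin 4) where
  Adj i j := i ≠ j ∧ ¬((i.val = 0 ∧ j.val = 1) ∨ (i.val = 1 ∧ j.val = 0))
  symm := ⟨fun i j h => ⟨h.1.symm, by tauto⟩⟩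
  loopless := ⟨fun i h => h.1 rfl⟩

/-- `C₃ * C₃`: two triangles `{0,1,2}` and `{0,3,4}` glued at the common vertex `0`. -/
def c3c3Graph : SimpleGraph (Fin 5) where
  Adj i j := i ≠ j ∧ (i.val = 0 ∨ j.val = 0 ∨
    (i.val ≤ 2 ∧ j.val ≤ 2) ∨ (3 ≤ i.val ∧ 3 ≤ j.val))
  symm := ⟨fun i j h => ⟨h.1.symm, by tauto⟩⟩
  loopless := ⟨fun i h => h.1 rfl⟩

/-!
A Pareto eigenvalue of a nonnegative matrix is the same as the eigenvalue of a positive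
eigenvector of a principal submatrix: restrict a Pareto eigenvector to its support, or extend
such an eigenvector by zero. In a graph of diameter 2 the off-diagonal entries of `D(G)` are `1`
on edges and `2` on non-edges. Supports of size at most 3 therefore give only `0`, `1`, `2`,
`1 + √3` (all present, from a diametral path `u - a - w`), `4`, and `(1 + √33)/2`, which comes
from an edge with a vertex non-adjacent to both ends; such a triple exists exactly when `G`
contains an induced `C₅` or `S₄⁺`. A support of size `k ≥ 4` contains a non-adjacent pair (as
`ω ≤ 3`), and summing the eigen-equations gives `μ ≥ (3 + √17)/2`, attained by `K₄ − e`. If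
`C₅`, `S₄⁺` and `K₄ − e` are all absent, non-adjacency is transitive, so a support of size `≥ 4`
contains an independent triple or has no vertex adjacent to all the others; in both cases
`μ ≥ 4`, attained by an independent triple or an induced `C₄`.
-/

open Function

section ParetoEigenvalue

variable {n : ℕ} {A : Matrix (Fin n) (Fin n) ℝ} {lam : ℝ} {x : Fin n → ℝ}

lemma sum_mul_eq_sum_comp_of_injective {k : ℕ} {f : Fin k → Fin n} (hf : Injective f)
    (g : Fin n → ℝ) (hx : ∀ j ∉ Set.range f, x j = 0) :
    ∑ j, g j * x j = ∑ b, g (f b) * x (f b) :=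
  (Fintype.sum_of_injective f hf _ _ (fun j hj => by simp [hx j hj]) fun _ => rfl).symm

/-- Complementary slackness: the terms `x j * ((A *ᵥ x) j - lam * x j)` are nonnegative and
sum to `x ⬝ᵥ A *ᵥ x - lam * (x ⬝ᵥ x) = 0`. -/
lemma IsParetoEigenpair.mulVec_apply_eq (hx : IsParetoEigenpair A lam x) {i : Fin n}
    (hi : 0 < x i) : (A *ᵥ x) i = lam * x i := by
  obtain ⟨hx0, hnn, hle, hlam⟩ := hx
  have hxx : x ⬝ᵥ x ≠ 0 := dotProduct_self_eq_zero.not.mpr hx0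
  have hsum : ∑ j, x j * ((A *ᵥ x) j - lam * x j) = 0 := by
    have hzero : x ⬝ᵥ A *ᵥ x - lam * (x ⬝ᵥ x) = 0 := by
      rw [hlam, div_mul_cancel₀ _ hxx, sub_self]
    rw [← hzero]
    simp only [dotProduct, mul_sub, Finset.sum_sub_distrib, Finset.mul_sum]
    exact congrArg _ (Finset.sum_congr rfl fun j _ => by ring)
  have hterm := (Finset.sum_eq_zero_iff_of_nonneg fun j _ =>
    mul_nonneg (hnn j) (sub_nonneg.mpr (hle j))).mp hsum i (Finset.mem_univ i)
  linarith [(mul_eq_zero.mp hterm).resolve_left hi.ne']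

lemma IsParetoEigenvalue.exists_submatrix (h : IsParetoEigenvalue A lam) :
    ∃ (k : ℕ) (f : Fin k → Fin n) (c : Fin k → ℝ), 0 < k ∧ Injective f ∧ (∀ a, 0 < c a) ∧
      A.submatrix f f *ᵥ c = lam • c := by
  obtain ⟨x, hx⟩ := h
  set J := Finset.univ.filter fun i => 0 < x i
  let f := J.orderEmbOfFin rfl
  have hJ : J.Nonempty := by
    obtain ⟨i, hi⟩ := Function.ne_iff.mp hx.1
    exact ⟨i, by simpa [J] using (hx.2.1 i).lt_of_ne' hi⟩
  have hpos : ∀ a, 0 < x (f a) := fun a => (Finset.mem_filter.mp (J.orderEmbOfFin_mem rfl a)).2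
  have hout : ∀ j ∉ Set.range f, x j = 0 := fun j hj => by
    rw [Finset.range_orderEmbOfFin J rfl] at hj
    exact le_antisymm (by simpa [J] using hj) (hx.2.1 j)
  refine ⟨J.card, f, x ∘ f, hJ.card_pos, f.injective, hpos, funext fun a => ?_⟩
  change ∑ b, A (f a) (f b) * x (f b) = lam * x (f a)
  rw [← hx.mulVec_apply_eq (hpos a)]
  exact (sum_mul_eq_sum_comp_of_injective f.injective _ hout).symm

lemma isParetoEigenvalue_of_submatrix (hA : ∀ i j, 0 ≤ A i j) {k : ℕ} (hk : 0 < k)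
    {f : Fin k → Fin n} (hf : Injective f) {c : Fin k → ℝ} (hc : ∀ a, 0 < c a)
    (h : A.submatrix f f *ᵥ c = lam • c) : IsParetoEigenvalue A lam := by
  set x := extend f c (0 : Fin n → ℝ)
  have hxf : ∀ a, x (f a) = c a := hf.extend_apply c 0
  have hout : ∀ j ∉ Set.range f, x j = 0 := fun j hj => extend_apply' c (0 : Fin n → ℝ) j hj
  have hnn : ∀ j, 0 ≤ x j := fun j => by
    by_cases hj : j ∈ Set.range f
    · obtain ⟨a, rfl⟩ := hj
      rw [hxf]
      exact (hc a).le
    · exact (hout j hj).ge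
  have hmul : ∀ i, (A *ᵥ x) i = ∑ b, A i (f b) * c b := fun i => by
    simp only [mulVec, dotProduct, sum_mul_eq_sum_comp_of_injective hf _ hout, hxf]
  have hrow : ∀ a, (A *ᵥ x) (f a) = lam * x (f a) := fun a => by
    rw [hmul, hxf, ← smul_eq_mul, ← Pi.smul_apply, ← h]
    rfl
  have hxx : 0 < x ⬝ᵥ x := by
    rw [dotProduct, sum_mul_eq_sum_comp_of_injective hf _ hout]
    exact Finset.sum_pos (fun a _ => by rw [hxf]; exact mul_pos (hc a) (hc a))
      ⟨⟨0, hk⟩, Finset.mem_univ _⟩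
  refine ⟨x, fun h0 => ?_, hnn, fun i => ?_, ?_⟩
  · exact (hc ⟨0, hk⟩).ne' (by rw [← hxf, h0, Pi.zero_apply])
  · by_cases hi : i ∈ Set.range f
    · obtain ⟨a, rfl⟩ := hi
      exact (hrow a).ge
    · rw [hout i hi, mul_zero, hmul]
      exact Finset.sum_nonneg fun b _ => mul_nonneg (hA _ _) (hc b).le
  · have : x ⬝ᵥ A *ᵥ x = lam * (x ⬝ᵥ x) := by
      rw [dotProduct_comm, dotProduct, sum_mul_eq_sum_comp_of_injective hf _ hout, dotProduct,
        sum_mul_eq_sum_comp_of_injective hf _ hout, Finset.mul_sum]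
      exact Finset.sum_congr rfl fun a _ => by rw [hrow]; ring
    rw [this, mul_div_assoc, div_self hxx.ne', mul_one]

end ParetoEigenvalue

section Cubics

variable {x : ℝ}

lemma eq_two_of_cubic (hx : 0 < x) (h : x ^ 3 - 3 * x - 2 = 0) : x = 2 := by
  have : (x - 2) * (x + 1) ^ 2 = 0 := by linear_combination h
  rcases mul_eq_zero.mp this with h | h
  · linarith
  · nlinarith

lemma eq_one_add_sqrt_three_of_cubic (hx : 0 < x) (h : x ^ 3 - 6 * x - 4 = 0) :
    x = 1 + √3 := by
  have hs := Real.sq_sqrt (show (0:ℝ) ≤ 3 by norm_num)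
  have : (x + 2) * (x - 1 - √3) * (x - 1 + √3) = 0 := by linear_combination h - (x + 2) * hs
  rcases mul_eq_zero.mp this with h | h
  · rcases mul_eq_zero.mp h with h | h <;> linarith
  · nlinarith [Real.sqrt_nonneg 3]

lemma eq_half_one_add_sqrt_33_of_cubic (hx : 0 < x) (h : x ^ 3 - 9 * x - 8 = 0) :
    x = (1 + √33) / 2 := by
  have hs := Real.sq_sqrt (show (0:ℝ) ≤ 33 by norm_num)
  have : (x + 1) * (2 * x - 1 - √33) * (2 * x - 1 + √33) = 0 := by
    linear_combination 4 * h - (x + 1) * hs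
  rcases mul_eq_zero.mp this with h | h
  · rcases mul_eq_zero.mp h with h | h <;> linarith
  · nlinarith [Real.sqrt_nonneg 33, show (1:ℝ) < √33 by rw [Real.lt_sqrt zero_le_one]; norm_num]

lemma eq_four_of_cubic (hx : 0 < x) (h : x ^ 3 - 12 * x - 16 = 0) : x = 4 := by
  have : (x - 4) * (x + 2) ^ 2 = 0 := by linear_combination h
  rcases mul_eq_zero.mp this with h | h
  · linarith
  · nlinarith

end Cubics

lemma half_three_add_sqrt_17_le {s t lam : ℝ} (hs : 0 < s) (ht : 0 < t)
    (h₁ : 2 * s ≤ lam * t) (h₂ : 3 * s + t ≤ lam * s) : (3 + √17) / 2 ≤ lam := by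
  have h3 : 3 < lam := by nlinarith
  have hq : 2 ≤ lam * (lam - 3) := by nlinarith
  have hs17 := Real.sq_sqrt (show (0:ℝ) ≤ 17 by norm_num)
  nlinarith [Real.sqrt_nonneg 17]

lemma one_add_sqrt_three_lt_half_one_add_sqrt_33 : 1 + √3 < (1 + √33) / 2 := by
  have h3 : √3 < 7 / 4 := (Real.sqrt_lt' (by norm_num)).mpr (by norm_num)
  have h33 : 11 / 2 < √33 := (Real.lt_sqrt (by norm_num)).mpr (by norm_num)
  linarith

lemma half_one_add_sqrt_33_lt_half_three_add_sqrt_17 : (1 + √33) / 2 < (3 + √17) / 2 := by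
  have h33 : √33 < 23 / 4 := (Real.sqrt_lt' (by norm_num)).mpr (by norm_num)
  have h17 : 4 < √17 := (Real.lt_sqrt (by norm_num)).mpr (by norm_num)
  linarith

lemma half_three_add_sqrt_17_le_four : (3 + √17) / 2 ≤ 4 := by
  have : √17 ≤ 5 := Real.sqrt_le_iff.mpr ⟨by norm_num, by norm_num⟩
  linarith

lemma injective_vecCons_three {α : Type*} {x y z : α} (hxy : x ≠ y) (hxz : x ≠ z)
    (hyz : y ≠ z) : Injective ![x, y, z] := by
  simp only [Matrix.vecCons, Fin.cons_injective_iff]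
  simp [hxy, hxz, hyz, Injective, eq_iff_true_of_subsingleton]

lemma injective_vecCons_four {α : Type*} {x y z w : α} (hxy : x ≠ y) (hxz : x ≠ z)
    (hxw : x ≠ w) (hyz : y ≠ z) (hyw : y ≠ w) (hzw : z ≠ w) : Injective ![x, y, z, w] := by
  simp only [Matrix.vecCons, Fin.cons_injective_iff]
  simp [hxy, hxz, hxw, hyz, hyw, hzw, Injective, eq_iff_true_of_subsingleton]

namespace SimpleGraph

variable {V : Type*} {G : SimpleGraph V} {u v w : V}

/-- In a graph of diameter 2: an induced `K₂ ∪ K₁`. -/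
def HasVertexFarFromEdge (G : SimpleGraph V) : Prop :=
  ∃ u v w, G.Adj v w ∧ G.dist u v = 2 ∧ G.dist u w = 2

/-- An induced `K₄ − e`: given the common neighbour `r`, `G.dist p q = 2` just says that `p ≠ q`
and `¬G.Adj p q`. -/
def HasDiamond (G : SimpleGraph V) : Prop :=
  ∃ p q r s, G.dist p q = 2 ∧ G.Adj p r ∧ G.Adj p s ∧ G.Adj q r ∧ G.Adj q s ∧ G.Adj r s

lemma Adj.dist_eq_one (h : G.Adj u v) : G.dist u v = 1 :=
  dist_eq_one_iff_adj.mpr h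

lemma ne_of_dist_eq_two (h : G.dist u v = 2) : u ≠ v := by
  rintro rfl
  simp at h

lemma not_adj_of_dist_eq_two (h : G.dist u v = 2) : ¬G.Adj u v :=
  fun h' => by simp [h'.dist_eq_one] at h

lemma dist_eq_two_of_adj_of_adj (hne : u ≠ w) (hna : ¬G.Adj u w) (huv : G.Adj u v)
    (hvw : G.Adj v w) : G.dist u w = 2 := by
  have hle : G.dist u w ≤ 2 := dist_le (.cons huv (.cons hvw .nil))
  have hpos := (huv.reachable.trans hvw.reachable).pos_dist_of_ne hne
  have h1 : G.dist u w ≠ 1 := fun h => hna (dist_eq_one_iff_adj.mp h)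
  omega

lemma exists_adj_adj_of_dist_eq_two (h : G.dist u v = 2) : ∃ w, G.Adj u w ∧ G.Adj w v := by
  obtain ⟨p, hp⟩ := exists_walk_of_dist_ne_zero (by omega : G.dist u v ≠ 0)
  rw [h] at hp
  match p, hp with
  | .cons h₁ (.cons h₂ .nil), _ => exact ⟨_, h₁, h₂⟩

lemma dist_eq_one_or_two [Finite V] (hd : G.diam = 2) (h : u ≠ v) :
    G.dist u v = 1 ∨ G.dist u v = 2 := by
  have : Nontrivial V := G.nontrivial_of_diam_ne_zero (by omega)
  have hpos := (G.connected_iff_diam_ne_zero.mpr (by omega)).pos_dist_of_ne h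
  have hle : G.dist u v ≤ 2 := hd ▸ G.dist_le_diam (G.ediam_ne_top_of_diam_ne_zero (by omega))
  omega

lemma adj_or_dist_eq_two [Finite V] (hd : G.diam = 2) (h : u ≠ v) :
    G.Adj u v ∨ G.dist u v = 2 := by
  rw [← dist_eq_one_iff_adj]
  exact G.dist_eq_one_or_two hd h

lemma dist_eq_two_trans [Finite V] (hd : G.diam = 2) (hno : ¬G.HasVertexFarFromEdge)
    (huv : G.dist u v = 2) (hvw : G.dist v w = 2) (huw : u ≠ w) : G.dist u w = 2 :=
  (G.adj_or_dist_eq_two hd huw).resolve_left fun h => hno ⟨v, u, w, h, G.dist_comm.trans huv, hvw⟩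

end SimpleGraph

section Embeddings

variable {V : Type*} {G : SimpleGraph V}

lemma nonempty_k4MinusE_embedding_iff : Nonempty (k4MinusE ↪g G) ↔ G.HasDiamond := by
  constructor
  · rintro ⟨f⟩
    have hadj (a b : Fin 4) (hab : k4MinusE.Adj a b) : G.Adj (f a) (f b) := f.map_adj_iff.mpr hab
    have h01 : ¬G.Adj (f 0) (f 1) := fun h => (f.map_adj_iff.mp h).2 (by decide)
    refine ⟨f 0, f 1, f 2, f 3, G.dist_eq_two_of_adj_of_adj (f.injective.ne (by decide)) h01
      (hadj 0 2 ⟨by decide, by decide⟩) (hadj 2 1 ⟨by decide, by decide⟩),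
      hadj 0 2 ⟨by decide, by decide⟩, hadj 0 3 ⟨by decide, by decide⟩,
      hadj 1 2 ⟨by decide, by decide⟩, hadj 1 3 ⟨by decide, by decide⟩,
      hadj 2 3 ⟨by decide, by decide⟩⟩
  · rintro ⟨p, q, r, s, hpq, hpr, hps, hqr, hqs, hrs⟩
    have hpq' := G.not_adj_of_dist_eq_two hpq
    have hqp' := G.not_adj_of_dist_eq_two (G.dist_comm.trans hpq)
    refine ⟨⟨⟨![p, q, r, s], injective_vecCons_four (G.ne_of_dist_eq_two hpq) hpr.ne hps.ne
      hqr.ne hqs.ne hrs.ne⟩, fun {a b} => ?_⟩⟩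
    fin_cases a <;> fin_cases b <;>
      simp [k4MinusE, hpq', hqp', hpr, hps, hqr, hqs, hrs, hpr.symm, hps.symm, hqr.symm, hqs.symm,
        hrs.symm]
lemma nonempty_starPlusGraph_embedding {x a b p : V} (hxa : G.Adj x a) (hxb : G.Adj x b)
    (hxp : G.Adj x p) (hab : G.Adj a b) (hpa : ¬G.Adj p a) (hpb : ¬G.Adj p b) (hpa' : p ≠ a)
    (hpb' : p ≠ b) : Nonempty (starPlusGraph 4 ↪g G) := by
  have hap : ¬G.Adj a p := fun h => hpa h.symm
  have hbp : ¬G.Adj b p := fun h => hpb h.symm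
  refine ⟨⟨⟨![x, a, b, p], injective_vecCons_four hxa.ne hxb.ne hxp.ne hab.ne hpa'.symm
    hpb'.symm⟩, fun {i j} => ?_⟩⟩
  fin_cases i <;> fin_cases j <;>
    simp [starPlusGraph, hxa, hxb, hxp, hab, hxa.symm, hxb.symm, hxp.symm, hab.symm, hpa, hpb,
      hap, hbp]

lemma nonempty_cycleGraph_five_embedding {v₀ v₁ v₂ v₃ v₄ : V} (h₀₁ : G.Adj v₀ v₁)
    (h₁₂ : G.Adj v₁ v₂) (h₂₃ : G.Adj v₂ v₃) (h₃₄ : G.Adj v₃ v₄) (h₄₀ : G.Adj v₄ v₀)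
    (h₀₂ : G.dist v₀ v₂ = 2) (h₀₃ : G.dist v₀ v₃ = 2) (h₁₃ : G.dist v₁ v₃ = 2)
    (h₁₄ : G.dist v₁ v₄ = 2) (h₂₄ : G.dist v₂ v₄ = 2) : Nonempty (cycleGraph 5 ↪g G) := by
  have hinj : Injective ![v₀, v₁, v₂, v₃, v₄] := by
    simp only [Matrix.vecCons, Fin.cons_injective_iff]
    simp [h₀₁.ne, h₁₂.ne, h₂₃.ne, h₃₄.ne, h₄₀.ne.symm, G.ne_of_dist_eq_two h₀₂,
      G.ne_of_dist_eq_two h₀₃, G.ne_of_dist_eq_two h₁₃, G.ne_of_dist_eq_two h₁₄,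
      G.ne_of_dist_eq_two h₂₄, Injective, eq_iff_true_of_subsingleton]
  refine ⟨⟨⟨_, hinj⟩, fun {i j} => ?_⟩⟩
  fin_cases i <;> fin_cases j <;>
    simp [SimpleGraph.cycleGraph_adj, h₀₁, h₁₂, h₂₃, h₃₄, h₄₀, h₀₁.symm, h₁₂.symm, h₂₃.symm,
      h₃₄.symm, h₄₀.symm, G.not_adj_of_dist_eq_two h₀₂, G.not_adj_of_dist_eq_two h₀₃,
      G.not_adj_of_dist_eq_two h₁₃, G.not_adj_of_dist_eq_two h₁₄, G.not_adj_of_dist_eq_two h₂₄,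
      G.not_adj_of_dist_eq_two (G.dist_comm.trans h₀₂),
      G.not_adj_of_dist_eq_two (G.dist_comm.trans h₀₃),
      G.not_adj_of_dist_eq_two (G.dist_comm.trans h₁₃),
      G.not_adj_of_dist_eq_two (G.dist_comm.trans h₁₄),
      G.not_adj_of_dist_eq_two (G.dist_comm.trans h₂₄)] <;> decide

lemma nonempty_cycleGraph_five_or_starPlusGraph_embedding_iff :
    (Nonempty (cycleGraph 5 ↪g G) ∨ Nonempty (starPlusGraph 4 ↪g G)) ↔
      G.HasVertexFarFromEdge := by
  constructor
  · rintro (hC | hS)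
    · obtain ⟨f⟩ := hC
      have hadj (a b : Fin 5) (h : (cycleGraph 5).Adj a b) : G.Adj (f a) (f b) :=
        f.map_adj_iff.mpr h
      have hna (a b : Fin 5) (h : ¬(cycleGraph 5).Adj a b) : ¬G.Adj (f a) (f b) :=
        fun h' => h (f.map_adj_iff.mp h')
      exact ⟨f 3, f 0, f 1, hadj 0 1 (by decide),
        G.dist_eq_two_of_adj_of_adj (f.injective.ne (by decide)) (hna 3 0 (by decide))
          (hadj 3 4 (by decide)) (hadj 4 0 (by decide)),
        G.dist_eq_two_of_adj_of_adj (f.injective.ne (by decide)) (hna 3 1 (by decide))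
          (hadj 3 2 (by decide)) (hadj 2 1 (by decide))⟩
    · obtain ⟨f⟩ := hS
      have hadj (a b : Fin 4) (h : (starPlusGraph 4).Adj a b) : G.Adj (f a) (f b) :=
        f.map_adj_iff.mpr h
      have hna (a b : Fin 4) (h : ¬(starPlusGraph 4).Adj a b) : ¬G.Adj (f a) (f b) :=
        fun h' => h (f.map_adj_iff.mp h')
      exact ⟨f 3, f 1, f 2, hadj 1 2 (by simp [starPlusGraph]),
        G.dist_eq_two_of_adj_of_adj (f.injective.ne (by decide)) (hna 3 1 (by simp [starPlusGraph]))
          (hadj 3 0 (by simp [starPlusGraph])) (hadj 0 1 (by simp [starPlusGraph])),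
        G.dist_eq_two_of_adj_of_adj (f.injective.ne (by decide)) (hna 3 2 (by simp [starPlusGraph]))
          (hadj 3 0 (by simp [starPlusGraph])) (hadj 0 2 (by simp [starPlusGraph]))⟩
  · rintro ⟨u, v, w, hvw, huv, huw⟩
    have nuv := G.not_adj_of_dist_eq_two huv
    have nuw := G.not_adj_of_dist_eq_two huw
    have nvu : ¬G.Adj v u := fun h => nuv h.symm
    have nwu : ¬G.Adj w u := fun h => nuw h.symm
    obtain ⟨a, hua, hav⟩ := G.exists_adj_adj_of_dist_eq_two huv
    by_cases haw : G.Adj a w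
    · exact .inr (nonempty_starPlusGraph_embedding hav haw hua.symm hvw nuv nuw
        (G.ne_of_dist_eq_two huv) (G.ne_of_dist_eq_two huw))
    obtain ⟨b, hub, hbw⟩ := G.exists_adj_adj_of_dist_eq_two huw
    by_cases hbv : G.Adj b v
    · exact .inr (nonempty_starPlusGraph_embedding hbv hbw hub.symm hvw nuv nuw
        (G.ne_of_dist_eq_two huv) (G.ne_of_dist_eq_two huw))
    have hvb : ¬G.Adj v b := fun h => hbv h.symm
    by_cases hab : G.Adj a b
    · exact .inr (nonempty_starPlusGraph_embedding hua.symm hab hav hub nvu hvb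
        (G.ne_of_dist_eq_two huv).symm (by rintro rfl; exact nuv hub))
    exact .inl (nonempty_cycleGraph_five_embedding hua hav hvw hbw.symm hub.symm huv huw
      (G.dist_eq_two_of_adj_of_adj (by rintro rfl; exact nuw hua) haw hav hvw)
      (G.dist_eq_two_of_adj_of_adj (by rintro rfl; exact hbv hav) hab hua.symm hub)
      (G.dist_eq_two_of_adj_of_adj (by rintro rfl; exact nuv hub) hvb hvw hbw.symm))

end Embeddings

section Members

variable {n : ℕ} {G : SimpleGraph (Fin n)} {u v w : Fin n} {lam : ℝ}

@[simp]
lemma distMatrix_apply (u v : Fin n) : distMatrix G u v = G.dist u v := rfl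

lemma mem_distParetoSet_of_submatrix {k : ℕ} (hk : 0 < k) {f : Fin k → Fin n}
    (hf : Injective f) {c : Fin k → ℝ} (hc : ∀ a, 0 < c a)
    (h : (distMatrix G).submatrix f f *ᵥ c = lam • c) : lam ∈ distParetoSet G :=
  isParetoEigenvalue_of_submatrix (fun _ _ => Nat.cast_nonneg _) hk hf hc h

lemma zero_mem_distParetoSet (u : Fin n) : (0 : ℝ) ∈ distParetoSet G :=
  mem_distParetoSet_of_submatrix one_pos (f := ![u]) (fun a b _ => Subsingleton.elim a b)
    (c := ![1]) (fun a => by simp) (by ext a; fin_cases a; simp [mulVec, dotProduct])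

lemma dist_mem_distParetoSet (h : u ≠ v) : (G.dist u v : ℝ) ∈ distParetoSet G :=
  mem_distParetoSet_of_submatrix two_pos (f := ![u, v]) (injective_pair_iff_ne.mpr h)
    (c := ![1, 1]) (fun a => by fin_cases a <;> simp)
    (by ext a; fin_cases a <;> simp [mulVec, dotProduct, G.dist_comm])

lemma one_add_sqrt_three_mem_distParetoSet (huv : G.Adj u v) (hvw : G.Adj v w)
    (huw : G.dist u w = 2) : 1 + √3 ∈ distParetoSet G := by
  have h3 : 1 < √3 := by rw [Real.lt_sqrt zero_le_one]; norm_num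
  have hs := Real.sq_sqrt (show (0:ℝ) ≤ 3 by norm_num)
  refine mem_distParetoSet_of_submatrix three_pos
    (injective_vecCons_three huv.ne (G.ne_of_dist_eq_two huw) hvw.ne)
    (c := ![1, √3 - 1, 1]) (fun a => by fin_cases a <;> simp [h3]) ?_
  ext a
  fin_cases a <;>
    simp [mulVec, dotProduct, Fin.sum_univ_three, huv.dist_eq_one, hvw.dist_eq_one,
      huv.symm.dist_eq_one, hvw.symm.dist_eq_one, huw, G.dist_comm.trans huw] <;> nlinarith

lemma half_one_add_sqrt_33_mem_distParetoSet (hvw : G.Adj v w) (huv : G.dist u v = 2)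
    (huw : G.dist u w = 2) : (1 + √33) / 2 ∈ distParetoSet G := by
  have h33 : 1 < √33 := by rw [Real.lt_sqrt zero_le_one]; norm_num
  have hs := Real.sq_sqrt (show (0:ℝ) ≤ 33 by norm_num)
  refine mem_distParetoSet_of_submatrix three_pos
    (injective_vecCons_three (G.ne_of_dist_eq_two huv) (G.ne_of_dist_eq_two huw) hvw.ne)
    (c := ![(√33 - 1) / 4, 1, 1]) (fun a => by fin_cases a <;> simp [h33]) ?_
  ext a
  fin_cases a <;>
    simp [mulVec, dotProduct, Fin.sum_univ_three, hvw.dist_eq_one, hvw.symm.dist_eq_one, huv,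
      huw, G.dist_comm.trans huv, G.dist_comm.trans huw] <;> nlinarith

lemma half_three_add_sqrt_17_mem_distParetoSet {p q r s : Fin n} (hpq : G.dist p q = 2)
    (hpr : G.Adj p r) (hps : G.Adj p s) (hqr : G.Adj q r) (hqs : G.Adj q s) (hrs : G.Adj r s) :
    (3 + √17) / 2 ∈ distParetoSet G := by
  have h17 : 1 < √17 := by rw [Real.lt_sqrt zero_le_one]; norm_num
  have hs := Real.sq_sqrt (show (0:ℝ) ≤ 17 by norm_num)
  refine mem_distParetoSet_of_submatrix four_pos
    (injective_vecCons_four (G.ne_of_dist_eq_two hpq) hpr.ne hps.ne hqr.ne hqs.ne hrs.ne)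
    (c := ![(1 + √17) / 4, (1 + √17) / 4, 1, 1])
    (fun a => by fin_cases a <;> simp <;> positivity) ?_
  ext a
  fin_cases a <;>
    simp [mulVec, dotProduct, Fin.sum_univ_four, hpr.dist_eq_one, hps.dist_eq_one,
      hqr.dist_eq_one, hqs.dist_eq_one, hrs.dist_eq_one, hpr.symm.dist_eq_one,
      hps.symm.dist_eq_one, hqr.symm.dist_eq_one, hqs.symm.dist_eq_one, hrs.symm.dist_eq_one,
      hpq, G.dist_comm.trans hpq] <;> nlinarith

lemma four_mem_distParetoSet_of_dist_eq_two (huv : G.dist u v = 2) (huw : G.dist u w = 2)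
    (hvw : G.dist v w = 2) : (4 : ℝ) ∈ distParetoSet G := by
  refine mem_distParetoSet_of_submatrix three_pos
    (injective_vecCons_three (G.ne_of_dist_eq_two huv) (G.ne_of_dist_eq_two huw)
      (G.ne_of_dist_eq_two hvw))
    (c := fun _ => 1) (fun _ => one_pos) ?_
  ext a
  fin_cases a <;>
    simp [mulVec, dotProduct, Fin.sum_univ_three, huv, huw, hvw, G.dist_comm.trans huv,
      G.dist_comm.trans huw, G.dist_comm.trans hvw] <;> norm_num

lemma four_mem_distParetoSet_of_cycle {p q r s : Fin n} (hpq : G.dist p q = 2)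
    (hrs : G.dist r s = 2) (hpr : G.Adj p r) (hps : G.Adj p s) (hqr : G.Adj q r)
    (hqs : G.Adj q s) : (4 : ℝ) ∈ distParetoSet G := by
  refine mem_distParetoSet_of_submatrix four_pos
    (injective_vecCons_four (G.ne_of_dist_eq_two hpq) hpr.ne hps.ne hqr.ne hqs.ne
      (G.ne_of_dist_eq_two hrs))
    (c := fun _ => 1) (fun _ => one_pos) ?_
  ext a
  fin_cases a <;>
    simp [mulVec, dotProduct, Fin.sum_univ_four, hpr.dist_eq_one, hps.dist_eq_one,
      hqr.dist_eq_one, hqs.dist_eq_one, hpr.symm.dist_eq_one, hps.symm.dist_eq_one,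
      hqr.symm.dist_eq_one, hqs.symm.dist_eq_one, hpq, hrs, G.dist_comm.trans hpq,
      G.dist_comm.trans hrs] <;> norm_num

lemma subset_distParetoSet_of_diam_eq_two (hd : G.diam = 2) :
    {0, 1, 2, 1 + √3} ⊆ distParetoSet G := by
  have : Nonempty (Fin n) := (G.nontrivial_of_diam_ne_zero (by omega)).to_nonempty
  obtain ⟨p, q, hpq⟩ := G.exists_dist_eq_diam
  rw [hd] at hpq
  obtain ⟨a, hpa, haq⟩ := G.exists_adj_adj_of_dist_eq_two hpq
  rintro x (rfl | rfl | rfl | rfl)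
  · exact zero_mem_distParetoSet p
  · simpa [hpa.dist_eq_one] using dist_mem_distParetoSet (G := G) hpa.ne
  · simpa [hpq] using dist_mem_distParetoSet (G := G) (G.ne_of_dist_eq_two hpq)
  · exact one_add_sqrt_three_mem_distParetoSet hpa haq hpq

lemma four_mem_distParetoSet_of_not_hasDiamond (hn : 4 ≤ n) (hd : G.diam = 2)
    (hno : ¬G.HasVertexFarFromEdge) (hnd : ¬G.HasDiamond) : (4 : ℝ) ∈ distParetoSet G := by
  have : Nonempty (Fin n) := ⟨⟨0, by omega⟩⟩
  obtain ⟨p, q, hpq⟩ := G.exists_dist_eq_diam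
  rw [hd] at hpq
  obtain ⟨a, hpa, haq⟩ := G.exists_adj_adj_of_dist_eq_two hpq
  obtain ⟨b, -, hb⟩ := Finset.exists_mem_notMem_of_card_lt_card
    (s := {p, q, a}) (t := Finset.univ)
    (Finset.card_le_three.trans_lt (by rw [Finset.card_univ, Fintype.card_fin]; omega))
  simp only [Finset.mem_insert, Finset.mem_singleton, not_or] at hb
  obtain ⟨hbp, hbq, hba⟩ := hb
  by_cases hpb : G.dist p b = 2
  · exact four_mem_distParetoSet_of_dist_eq_two hpq hpb
      (G.dist_eq_two_trans hd hno (G.dist_comm.trans hpq) hpb (Ne.symm hbq))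
  by_cases hqb : G.dist q b = 2
  · exact four_mem_distParetoSet_of_dist_eq_two hpq
      (G.dist_eq_two_trans hd hno hpq hqb (Ne.symm hbp)) hqb
  have hpb' := (G.adj_or_dist_eq_two hd (Ne.symm hbp)).resolve_right hpb
  have hqb' := (G.adj_or_dist_eq_two hd (Ne.symm hbq)).resolve_right hqb
  have hab : G.dist a b = 2 := (G.adj_or_dist_eq_two hd (Ne.symm hba)).resolve_left
    fun hab => hnd ⟨p, q, a, b, hpq, hpa, hpb', haq.symm, hqb', hab⟩
  exact four_mem_distParetoSet_of_cycle hpq hab hpa hpb' haq.symm hqb'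

end Members

lemma sum_dist_mul_eq_of_submatrix {n k : ℕ} {G : SimpleGraph (Fin n)} {f : Fin k → Fin n}
    {c : Fin k → ℝ} {lam : ℝ} (h : (distMatrix G).submatrix f f *ᵥ c = lam • c) (a : Fin k) :
    ∑ b, (G.dist (f a) (f b) : ℝ) * c b = lam * c a :=
  congrFun h a

section SmallSupport

variable {n : ℕ} {G : SimpleGraph (Fin n)} {lam : ℝ}

lemma eq_zero_of_submatrix_one {f : Fin 1 → Fin n} {c : Fin 1 → ℝ} (hc : ∀ a, 0 < c a)
    (h : (distMatrix G).submatrix f f *ᵥ c = lam • c) : lam = 0 := by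
  have h0 := sum_dist_mul_eq_of_submatrix h 0
  simp only [Fin.sum_univ_one, SimpleGraph.dist_self, Nat.cast_zero, zero_mul] at h0
  exact (mul_eq_zero.mp h0.symm).resolve_right (hc 0).ne'

lemma eq_dist_of_submatrix_two {f : Fin 2 → Fin n} {c : Fin 2 → ℝ} (hc : ∀ a, 0 < c a)
    (h : (distMatrix G).submatrix f f *ᵥ c = lam • c) : lam = G.dist (f 0) (f 1) := by
  have h0 := sum_dist_mul_eq_of_submatrix h 0
  have h1 := sum_dist_mul_eq_of_submatrix h 1
  simp only [Fin.sum_univ_two, SimpleGraph.dist_self, Nat.cast_zero, zero_mul, zero_add,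
    add_zero, G.dist_comm (u := f 1)] at h0 h1
  set d : ℝ := (G.dist (f 0) (f 1) : ℝ)
  have hd : 0 ≤ d := Nat.cast_nonneg _
  have hlam : 0 ≤ lam := by nlinarith [hc 0, hc 1]
  have : (lam - d) * ((lam + d) * c 0) = 0 := by linear_combination -lam * h0 - d * h1
  rcases mul_eq_zero.mp this with h | h
  · linarith
  · nlinarith [hc 0, mul_eq_zero.mp h]

/-- With `C, B, A` the distances `01, 02, 12`, the characteristic polynomial of the support is
`λ³ - (A² + B² + C²) λ - 2ABC`; each of the eight distance patterns gives one of four cubics. -/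
lemma eq_of_submatrix_three (hd : G.diam = 2) {f : Fin 3 → Fin n} (hf : Injective f)
    {c : Fin 3 → ℝ} (hc : ∀ a, 0 < c a) (h : (distMatrix G).submatrix f f *ᵥ c = lam • c) :
    lam = 2 ∨ lam = 1 + √3 ∨ (lam = (1 + √33) / 2 ∧ G.HasVertexFarFromEdge) ∨ lam = 4 := by
  have h0 := sum_dist_mul_eq_of_submatrix h 0
  have h1 := sum_dist_mul_eq_of_submatrix h 1
  have h2 := sum_dist_mul_eq_of_submatrix h 2
  simp only [Fin.sum_univ_three, SimpleGraph.dist_self, Nat.cast_zero, zero_mul, zero_add,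
    add_zero, G.dist_comm (u := f 1) (v := f 0), G.dist_comm (u := f 2)] at h0 h1 h2
  set C : ℝ := (G.dist (f 0) (f 1) : ℝ) with hC
  set B : ℝ := (G.dist (f 0) (f 2) : ℝ) with hB
  set A : ℝ := (G.dist (f 1) (f 2) : ℝ) with hA
  have hcubic : (lam ^ 3 - (A ^ 2 + B ^ 2 + C ^ 2) * lam - 2 * A * B * C) * c 0 = 0 := by
    linear_combination (A ^ 2 - lam ^ 2) * h0 - (lam * C + A * B) * h1 - (lam * B + A * C) * h2
  replace hcubic := (mul_eq_zero.mp hcubic).resolve_right (hc 0).ne'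
  have hpair {a b : Fin 3} (hab : a ≠ b) := G.dist_eq_one_or_two hd (hf.ne hab)
  have hlam : 0 < lam := by
    have : 0 < C := by rcases hpair (show (0 : Fin 3) ≠ 1 by decide) with h | h <;> simp [hC, h]
    nlinarith [hc 0, hc 1, hc 2, show (0:ℝ) ≤ B from Nat.cast_nonneg _]
  rcases hpair (show (0 : Fin 3) ≠ 1 by decide) with h01 | h01 <;>
  rcases hpair (show (0 : Fin 3) ≠ 2 by decide) with h02 | h02 <;>
  rcases hpair (show (1 : Fin 3) ≠ 2 by decide) with h12 | h12 <;>
  simp only [hA, hB, hC, h01, h02, h12, Nat.cast_one, Nat.cast_ofNat] at hcubic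
  · exact .inl (eq_two_of_cubic hlam (by linarith))
  · exact .inr (.inl (eq_one_add_sqrt_three_of_cubic hlam (by linarith)))
  · exact .inr (.inl (eq_one_add_sqrt_three_of_cubic hlam (by linarith)))
  · exact .inr (.inr (.inl ⟨eq_half_one_add_sqrt_33_of_cubic hlam (by linarith),
      f 2, f 0, f 1, SimpleGraph.dist_eq_one_iff_adj.mp h01, G.dist_comm.trans h02,
      G.dist_comm.trans h12⟩))
  · exact .inr (.inl (eq_one_add_sqrt_three_of_cubic hlam (by linarith)))
  · exact .inr (.inr (.inl ⟨eq_half_one_add_sqrt_33_of_cubic hlam (by linarith),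
      f 1, f 0, f 2, SimpleGraph.dist_eq_one_iff_adj.mp h02, G.dist_comm.trans h01, h12⟩))
  · exact .inr (.inr (.inl ⟨eq_half_one_add_sqrt_33_of_cubic hlam (by linarith),
      f 0, f 1, f 2, SimpleGraph.dist_eq_one_iff_adj.mp h12, h01, h02⟩))
  · exact .inr (.inr (.inr (eq_four_of_cubic hlam (by linarith))))

end SmallSupport

section Support

variable {n k : ℕ} {G : SimpleGraph (Fin n)} {f : Fin k → Fin n} {c : Fin k → ℝ} {lam : ℝ}

lemma mem_of_submatrix_of_lt_four (hd : G.diam = 2) (hk₀ : 0 < k) (hk : k < 4)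
    (hf : Injective f) (hc : ∀ a, 0 < c a)
    (h : (distMatrix G).submatrix f f *ᵥ c = lam • c) :
    lam ∈ ({0, 1, 2, 1 + √3} : Set ℝ) ∨ (lam = (1 + √33) / 2 ∧ G.HasVertexFarFromEdge) ∨
      lam = 4 := by
  interval_cases k
  · simp [eq_zero_of_submatrix_one hc h]
  · rcases G.dist_eq_one_or_two hd (hf.ne (show (0 : Fin 2) ≠ 1 by decide)) with h01 | h01 <;>
      simp [eq_dist_of_submatrix_two hc h, h01]
  · rcases eq_of_submatrix_three hd hf hc h with h | h | h | h <;> simp [h]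

lemma mul_apply_eq_of_submatrix (hd : G.diam = 2) (hf : Injective f)
    (h : (distMatrix G).submatrix f f *ᵥ c = lam • c) (a : Fin k) :
    lam * c a = ∑ b, c b - c a + ∑ b, if G.dist (f a) (f b) = 2 then c b else 0 := by
  have hterm : ∀ b, (G.dist (f a) (f b) : ℝ) * c b =
      c b - (if a = b then c b else 0) + (if G.dist (f a) (f b) = 2 then c b else 0) := by
    intro b
    by_cases hab : a = b
    · simp [hab]
    rcases G.dist_eq_one_or_two hd (hf.ne hab) with h1 | h2
    · simp [hab, h1]
    · simp [hab, h2]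
      ring
  rw [← sum_dist_mul_eq_of_submatrix h a]
  simp only [hterm, Finset.sum_add_distrib, Finset.sum_sub_distrib, Finset.sum_ite_eq,
    Finset.mem_univ, if_true]

lemma mul_sum_eq_of_submatrix (hd : G.diam = 2) (hf : Injective f)
    (h : (distMatrix G).submatrix f f *ᵥ c = lam • c) :
    lam * ∑ a, c a = (k - 1) * ∑ a, c a +
      ∑ a, ∑ b, if G.dist (f a) (f b) = 2 then c b else 0 := by
  rw [Finset.mul_sum]
  simp only [mul_apply_eq_of_submatrix hd hf h, Finset.sum_add_distrib, Finset.sum_sub_distrib,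
    Finset.sum_const, Finset.card_univ, Fintype.card_fin, nsmul_eq_mul]
  ring

lemma single_le_sum_ite_dist_eq_two (hc : ∀ a, 0 < c a) {a b : Fin k}
    (hab : G.dist (f a) (f b) = 2) :
    c b ≤ ∑ j, if G.dist (f a) (f j) = 2 then c j else 0 :=
  (if_pos hab).symm.le.trans <| Finset.single_le_sum
    (f := fun j => if G.dist (f a) (f j) = 2 then c j else 0)
    (fun j _ => ite_nonneg (hc j).le le_rfl) (Finset.mem_univ b)

/-- With `s = ∑ c`, the rows of the far pair `a, b` give `2s ≤ λ (c a + c b)`, and the sum of all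
rows gives `3s + c a + c b ≤ λ s`. -/
lemma half_three_add_sqrt_17_le_of_submatrix (hd : G.diam = 2) (hf : Injective f)
    (hc : ∀ a, 0 < c a) (h : (distMatrix G).submatrix f f *ᵥ c = lam • c) (hk : 4 ≤ k)
    {a b : Fin k} (hab : G.dist (f a) (f b) = 2) : (3 + √17) / 2 ≤ lam := by
  set s := ∑ i, c i
  set g : Fin k → ℝ := fun i => ∑ j, if G.dist (f i) (f j) = 2 then c j else 0
  have hg : ∀ i, 0 ≤ g i := fun i => Finset.sum_nonneg fun j _ => ite_nonneg (hc j).le le_rfl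
  have hga : c b ≤ g a := single_le_sum_ite_dist_eq_two hc hab
  have hgb : c a ≤ g b := single_le_sum_ite_dist_eq_two hc (G.dist_comm.trans hab)
  have hne : a ≠ b := by rintro rfl; simp at hab
  have hsum : g a + g b ≤ ∑ i, g i :=
    Finset.add_le_sum (fun i _ => hg i) (Finset.mem_univ _) (Finset.mem_univ _) hne
  have hra := mul_apply_eq_of_submatrix hd hf h a
  have hrb := mul_apply_eq_of_submatrix hd hf h b
  have htot := mul_sum_eq_of_submatrix hd hf h
  have hs : 0 < s := Finset.sum_pos (fun i _ => hc i) ⟨a, Finset.mem_univ _⟩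
  have hk' : (4 : ℝ) ≤ k := by exact_mod_cast hk
  refine half_three_add_sqrt_17_le hs (add_pos (hc a) (hc b)) (by linarith) ?_
  nlinarith

lemma four_le_of_submatrix_of_far_triple (hd : G.diam = 2) (hf : Injective f)
    (hc : ∀ a, 0 < c a) (h : (distMatrix G).submatrix f f *ᵥ c = lam • c) {a b d : Fin k}
    (hab : G.dist (f a) (f b) = 2) (had : G.dist (f a) (f d) = 2)
    (hbd : G.dist (f b) (f d) = 2) : 4 ≤ lam := by
  have hne {i j : Fin k} (hij : G.dist (f i) (f j) = 2) : i ≠ j := by rintro rfl; simp at hij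
  have hfar {i j l : Fin k} (hij : G.dist (f i) (f j) = 2) (hil : G.dist (f i) (f l) = 2)
      (hjl : j ≠ l) : ∑ m, c m - c i + (c j + c l) ≤ lam * c i := by
    rw [mul_apply_eq_of_submatrix hd hf h i]
    gcongr
    convert Finset.add_le_sum (f := fun m => if G.dist (f i) (f m) = 2 then c m else 0)
      (fun m _ => ite_nonneg (hc m).le le_rfl) (Finset.mem_univ j) (Finset.mem_univ l) hjl
      using 1
    simp [hij, hil]
  have hT : c a + c b + c d ≤ ∑ m, c m := by
    have := Finset.sum_le_univ_sum_of_nonneg (s := {a, b, d}) (fun m => (hc m).le)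
    rwa [Finset.sum_insert (by simp [hne hab, hne had]), Finset.sum_pair (hne hbd),
      ← add_assoc] at this
  have ha := hfar hab had (hne hbd)
  have hb := hfar (G.dist_comm.trans hab) hbd (hne had)
  have hd' := hfar (G.dist_comm.trans had) (G.dist_comm.trans hbd) (hne hab)
  nlinarith [hc a, hc b, hc d]

lemma le_of_submatrix_of_forall_exists_far (hd : G.diam = 2) (hf : Injective f)
    (hc : ∀ a, 0 < c a) (h : (distMatrix G).submatrix f f *ᵥ c = lam • c) (hk : 0 < k)
    (hfar : ∀ b, ∃ a, G.dist (f a) (f b) = 2) : k ≤ lam := by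
  have htot := mul_sum_eq_of_submatrix hd hf h
  have hcol : ∑ b, c b ≤ ∑ a, ∑ b, if G.dist (f a) (f b) = 2 then c b else 0 := by
    rw [Finset.sum_comm]
    refine Finset.sum_le_sum fun b _ => ?_
    obtain ⟨a, hab⟩ := hfar b
    exact (if_pos hab).symm.le.trans <| Finset.single_le_sum
      (f := fun i => if G.dist (f i) (f b) = 2 then c b else 0)
      (fun i _ => ite_nonneg (hc b).le le_rfl) (Finset.mem_univ a)
  have hs : 0 < ∑ b, c b := Finset.sum_pos (fun i _ => hc i) ⟨⟨0, hk⟩, Finset.mem_univ _⟩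
  nlinarith

lemma exists_dist_eq_two_of_four_le (hd : G.diam = 2) (hclique : G.cliqueNum ≤ 3)
    (hf : Injective f) (hk : 4 ≤ k) : ∃ a b, G.dist (f a) (f b) = 2 := by
  by_contra! hno
  have hclq : G.IsClique (Finset.univ.map ⟨f, hf⟩ : Set (Fin n)) := by
    simp only [Finset.coe_map, Finset.coe_univ, Set.image_univ]
    rintro _ ⟨a, rfl⟩ _ ⟨b, rfl⟩ hab
    exact (G.adj_or_dist_eq_two hd hab).resolve_right (hno a b)
  have := hclq.card_le_cliqueNum
  simp only [Finset.card_map, Finset.card_univ, Fintype.card_fin] at this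
  omega

/-- If `o` has no far partner, take a far pair `p, q` and a fourth vertex `r`: were `r` adjacent to
both, `p, q, r, o` would span a diamond; otherwise transitivity of farness gives a triple. -/
lemma exists_far_triple_or_forall_exists_far (hd : G.diam = 2) (hclique : G.cliqueNum ≤ 3)
    (hno : ¬G.HasVertexFarFromEdge) (hnd : ¬G.HasDiamond) (hf : Injective f) (hk : 4 ≤ k) :
    (∃ a b d, G.dist (f a) (f b) = 2 ∧ G.dist (f a) (f d) = 2 ∧ G.dist (f b) (f d) = 2) ∨
      ∀ b, ∃ a, G.dist (f a) (f b) = 2 := by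
  refine or_iff_not_imp_right.mpr fun hall => ?_
  push Not at hall
  obtain ⟨o, ho⟩ := hall
  obtain ⟨p, q, hpq⟩ := exists_dist_eq_two_of_four_le hd hclique hf hk
  have hadj {a b : Fin k} (hab : a ≠ b) (hfar : G.dist (f a) (f b) ≠ 2) : G.Adj (f a) (f b) :=
    (G.adj_or_dist_eq_two hd (hf.ne hab)).resolve_right hfar
  have hpo : p ≠ o := by rintro rfl; exact ho q (G.dist_comm.trans hpq)
  have hqo : q ≠ o := by rintro rfl; exact ho p hpq
  obtain ⟨r, -, hr⟩ := Finset.exists_mem_notMem_of_card_lt_card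
    (s := {o, p, q}) (t := Finset.univ)
    (Finset.card_le_three.trans_lt (by rw [Finset.card_univ, Fintype.card_fin]; omega))
  simp only [Finset.mem_insert, Finset.mem_singleton, not_or] at hr
  obtain ⟨hro, hrp, hrq⟩ := hr
  by_cases hpr : G.dist (f p) (f r) = 2
  · exact ⟨p, q, r, hpq, hpr, G.dist_eq_two_trans hd hno (G.dist_comm.trans hpq) hpr
      (hf.ne (Ne.symm hrq))⟩
  by_cases hqr : G.dist (f q) (f r) = 2
  · exact ⟨q, p, r, G.dist_comm.trans hpq, hqr, G.dist_eq_two_trans hd hno hpq hqr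
      (hf.ne (Ne.symm hrp))⟩
  exact (hnd ⟨f p, f q, f r, f o, hpq, hadj (Ne.symm hrp) hpr, hadj hpo (ho p),
    hadj (Ne.symm hrq) hqr, hadj hqo (ho q), hadj hro (ho r)⟩).elim

lemma mem_distParetoSet_cases (hd : G.diam = 2) (hclique : G.cliqueNum ≤ 3)
    (hlam : lam ∈ distParetoSet G) :
    lam ∈ ({0, 1, 2, 1 + √3} : Set ℝ) ∨ (lam = (1 + √33) / 2 ∧ G.HasVertexFarFromEdge) ∨
      (3 + √17) / 2 ≤ lam := by
  obtain ⟨k, f, c, hk₀, hf, hc, h⟩ := IsParetoEigenvalue.exists_submatrix hlam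
  rcases lt_or_ge k 4 with hk | hk
  · rcases mem_of_submatrix_of_lt_four hd hk₀ hk hf hc h with h | h | h
    exacts [.inl h, .inr (.inl h), .inr (.inr (h ▸ half_three_add_sqrt_17_le_four))]
  · obtain ⟨a, b, hab⟩ := exists_dist_eq_two_of_four_le hd hclique hf hk
    exact .inr (.inr (half_three_add_sqrt_17_le_of_submatrix hd hf hc h hk hab))

lemma mem_distParetoSet_cases_of_not_hasDiamond (hd : G.diam = 2) (hclique : G.cliqueNum ≤ 3)
    (hno : ¬G.HasVertexFarFromEdge) (hnd : ¬G.HasDiamond) (hlam : lam ∈ distParetoSet G) :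
    lam ∈ ({0, 1, 2, 1 + √3} : Set ℝ) ∨ 4 ≤ lam := by
  obtain ⟨k, f, c, hk₀, hf, hc, h⟩ := IsParetoEigenvalue.exists_submatrix hlam
  rcases lt_or_ge k 4 with hk | hk
  · rcases mem_of_submatrix_of_lt_four hd hk₀ hk hf hc h with h | h | h
    exacts [.inl h, (hno h.2).elim, .inr h.ge]
  · rcases exists_far_triple_or_forall_exists_far hd hclique hno hnd hf hk with
      ⟨a, b, d, hab, had, hbd⟩ | hfar
    · exact .inr (four_le_of_submatrix_of_far_triple hd hf hc h hab had hbd)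
    · have hk' : (4 : ℝ) ≤ k := by exact_mod_cast hk
      exact .inr (hk'.trans (le_of_submatrix_of_forall_exists_far hd hf hc h hk₀ hfar))

end Support

lemma isKthSmallest_five {S : Set ℝ} {μ : ℝ} (hμ : μ ∈ S) (hlow : {0, 1, 2, 1 + √3} ⊆ S)
    (hlt : 1 + √3 < μ) (hS : ∀ y ∈ S, y < μ → y ∈ ({0, 1, 2, 1 + √3} : Set ℝ)) :
    IsKthSmallest S 5 μ := by
  have h3 : 1 < √3 := (Real.lt_sqrt zero_le_one).mpr (by norm_num)
  have h3' : √3 < 2 := (Real.sqrt_lt' (by norm_num)).mpr (by norm_num)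
  have hset : {x ∈ S | x < μ} = {0, 1, 2, 1 + √3} := by
    ext y
    refine ⟨fun ⟨hy, hyμ⟩ => hS y hy hyμ, fun hy => ⟨hlow hy, ?_⟩⟩
    rcases hy with rfl | rfl | rfl | rfl <;> linarith
  refine ⟨hμ, ?_⟩
  rw [hset]
  rw [Set.ncard_insert_of_notMem, Set.ncard_insert_of_notMem, Set.ncard_pair]
  all_goals norm_num
  all_goals exact fun h => by linarith

theorem stmt15_general (n : ℕ) (hn : 4 ≤ n) (G : SimpleGraph (Fin n))
    (hdiam : G.diam = 2) (hclique : G.cliqueNum ≤ 3) :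
    ((Nonempty (cycleGraph 5 ↪g G) ∨ Nonempty (starPlusGraph 4 ↪g G)) →
      IsKthSmallest (distParetoSet G) 5 ((1 + Real.sqrt 33) / 2)) ∧
    ((¬(Nonempty (cycleGraph 5 ↪g G) ∨ Nonempty (starPlusGraph 4 ↪g G)) ∧
        Nonempty (k4MinusE ↪g G)) →
      IsKthSmallest (distParetoSet G) 5 ((3 + Real.sqrt 17) / 2)) ∧
    ((¬(Nonempty (cycleGraph 5 ↪g G) ∨ Nonempty (starPlusGraph 4 ↪g G)) ∧
        ¬Nonempty (k4MinusE ↪g G)) →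
      IsKthSmallest (distParetoSet G) 5 4) := by
  have hlow := subset_distParetoSet_of_diam_eq_two hdiam
  have h₁ := one_add_sqrt_three_lt_half_one_add_sqrt_33
  have h₂ := half_one_add_sqrt_33_lt_half_three_add_sqrt_17
  rw [nonempty_cycleGraph_five_or_starPlusGraph_embedding_iff, nonempty_k4MinusE_embedding_iff]
  refine ⟨fun ⟨u, v, w, hvw, huv, huw⟩ => ?_,
    fun ⟨hno, p, q, r, s, hpq, hpr, hps, hqr, hqs, hrs⟩ => ?_,
    fun ⟨hno, hnd⟩ => ?_⟩
  · refine isKthSmallest_five (half_one_add_sqrt_33_mem_distParetoSet hvw huv huw) hlow h₁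
      fun y hy hlt => ?_
    rcases mem_distParetoSet_cases hdiam hclique hy with h | h | h
    exacts [h, (hlt.ne h.1).elim, ((hlt.trans h₂).not_ge h).elim]
  · refine isKthSmallest_five (half_three_add_sqrt_17_mem_distParetoSet hpq hpr hps hqr hqs hrs)
      hlow (h₁.trans h₂) fun y hy hlt => ?_
    rcases mem_distParetoSet_cases hdiam hclique hy with h | h | h
    exacts [h, (hno h.2).elim, (hlt.not_ge h).elim]
  · refine isKthSmallest_five (four_mem_distParetoSet_of_not_hasDiamond hn hdiam hno hnd) hlow
      (by linarith [half_three_add_sqrt_17_le_four]) fun y hy hlt => ?_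
    exact (mem_distParetoSet_cases_of_not_hasDiamond hdiam hclique hno hnd hy).resolve_right
      hlt.not_ge

theorem stmt15 (n : ℕ) (hn : 4 ≤ n) (G : SimpleGraph (Fin n)) (hG : G.Connected)
    (hdiam : G.diam = 2) (hclique : G.cliqueNum ≤ 3) :
    ((Nonempty (cycleGraph 5 ↪g G) ∨ Nonempty (starPlusGraph 4 ↪g G)) →
      IsKthSmallest (distParetoSet G) 5 ((1 + Real.sqrt 33) / 2)) ∧
    ((¬(Nonempty (cycleGraph 5 ↪g G) ∨ Nonempty (starPlusGraph 4 ↪g G)) ∧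
        Nonempty (k4MinusE ↪g G)) →
      IsKthSmallest (distParetoSet G) 5 ((3 + Real.sqrt 17) / 2)) ∧
    ((¬(Nonempty (cycleGraph 5 ↪g G) ∨ Nonempty (starPlusGraph 4 ↪g G)) ∧
        ¬Nonempty (k4MinusE ↪g G)) →
      IsKthSmallest (distParetoSet G) 5 4) :=
  stmt15_general n hn G hdiam hclique
end

section
/- If G is a connected graph with at least 5 vertices and μ₅(G) = (3+√17)/2, then μ₆(G) = 4. -/
open Matrix SimpleGraph

/-!
For a nonnegative symmetric matrix, a Pareto eigenvector is a Perron vector of the principal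
submatrix on its support, and a Perron vector maximizes the Rayleigh quotient among vectors
supported where it is positive. So small vertex sets whose distance pattern has a positive
eigenvector produce distance Pareto eigenvalues, and a Pareto eigenvalue is bounded below by the
average distance sum of any vertex set inside its support, and above by the Perron root of any
pattern dominating the distances on its support.

An irrational Pareto eigenvalue rules out `G` complete, so a vertex, an edge and an induced path
`P₃` give `0, 1, 2, 1 + √3 < μ₅`; these are therefore all of `Π(G)` below `μ₅ = (3 + √17) / 2`.
Hence `3 ∉ Π(G)`, so `G` has diameter `2` and no `K₄`, and `(1 + √33) / 2 ∉ Π(G)`, so being at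
distance `2` is transitive. As `n ≥ 5`, `G` then contains three vertices pairwise at distance
`2` or an induced `C₄`, and both have constant distance row sums `4`, whence `4 ∈ Π(G)`.
Finally no Pareto eigenvalue lies in `(μ₅, 4)`: its support would have at most four vertices,
contain a pair at distance `2` and neither of the two configurations above, so its distances are
dominated by those of `K₄ - e`, whose Perron root is `μ₅`.
-/

open Function

section Compression

variable {ι κ : Type*} {v : κ → ι}

theorem support_extend_zero_subset (c : κ → ℝ) :
    Function.support (extend v c (0 : ι → ℝ)) ⊆ Set.range v := fun i hi => by
  by_contra h
  exact hi (extend_apply' c (0 : ι → ℝ) i (by simpa using h))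

theorem extend_zero_comp (hv : Injective v) (c : κ → ℝ) : extend v c (0 : ι → ℝ) ∘ v = c :=
  funext fun j => hv.extend_apply c 0 j

variable [Fintype ι] [Fintype κ]

theorem sum_eq_sum_comp_of_support_subset (hv : Injective v) {f : ι → ℝ}
    (hf : Function.support f ⊆ Set.range v) : ∑ i, f i = ∑ j, f (v j) :=
  (Fintype.sum_of_injective v hv _ f (fun _ hi => notMem_support.mp (hi ∘ (hf ·)))
    fun _ => rfl).symm

theorem mulVec_apply_eq_submatrix_mulVec (hv : Injective v) (A : Matrix ι ι ℝ) {y : ι → ℝ}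
    (hy : Function.support y ⊆ Set.range v) (j : κ) :
    (A *ᵥ y) (v j) = (A.submatrix v v *ᵥ (y ∘ v)) j :=
  sum_eq_sum_comp_of_support_subset hv fun _ hl => hy (right_ne_zero_of_mul hl)

theorem dotProduct_mulVec_eq_submatrix (hv : Injective v) (A : Matrix ι ι ℝ) {x y : ι → ℝ}
    (hx : Function.support x ⊆ Set.range v) (hy : Function.support y ⊆ Set.range v) :
    x ⬝ᵥ A *ᵥ y = (x ∘ v) ⬝ᵥ A.submatrix v v *ᵥ (y ∘ v) := by
  rw [dotProduct, sum_eq_sum_comp_of_support_subset hv fun _ hi => hx (left_ne_zero_of_mul hi)]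
  simp only [mulVec_apply_eq_submatrix_mulVec hv A hy]
  rfl

theorem dotProduct_self_eq_comp (hv : Injective v) {x : ι → ℝ}
    (hx : Function.support x ⊆ Set.range v) : x ⬝ᵥ x = (x ∘ v) ⬝ᵥ (x ∘ v) :=
  sum_eq_sum_comp_of_support_subset hv fun _ hi => hx (left_ne_zero_of_mul hi)

end Compression

theorem mul_le_sq_div_mul_add_sq_div_mul {a b s t : ℝ} (hs : 0 ≤ s) (ht : 0 ≤ t)
    (ha : s = 0 → a = 0) (hb : t = 0 → b = 0) : a * b ≤ (a ^ 2 / s * t + b ^ 2 / t * s) / 2 := by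
  rcases hs.eq_or_lt with rfl | hs
  · simp [ha rfl]
  rcases ht.eq_or_lt with rfl | ht
  · simp [hb rfl]
  have hsq : (a ^ 2 / s * t + b ^ 2 / t * s) / 2 - a * b
      = (a * t - b * s) ^ 2 / (2 * (s * t)) := by
    field_simp
    ring
  have : 0 ≤ (a * t - b * s) ^ 2 / (2 * (s * t)) := by positivity
  linarith

theorem dotProduct_mulVec_le_of_mulVec_eq {ι : Type*} [Fintype ι] {A : Matrix ι ι ℝ} {μ : ℝ}
    {y z : ι → ℝ} (hA : ∀ i j, 0 ≤ A i j) (hAs : A.IsSymm) (hy : ∀ i, 0 ≤ y i)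
    (hAy : ∀ i, y i ≠ 0 → (A *ᵥ y) i = μ * y i) (hz : ∀ i, z i ≠ 0 → y i ≠ 0) :
    z ⬝ᵥ A *ᵥ z ≤ μ * (z ⬝ᵥ z) := by
  set q : ι → ℝ := fun i => z i ^ 2 / y i
  have hzy : ∀ i, y i = 0 → z i = 0 := fun i => not_imp_not.mp (hz i)
  have hq : ∀ i, q i * y i = z i ^ 2 := fun i => by
    by_cases hyi : y i = 0
    · simp [q, hyi, hzy i hyi]
    · exact div_mul_cancel₀ _ hyi
  calc z ⬝ᵥ A *ᵥ z = ∑ i, ∑ j, A i j * (z i * z j) := by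
        simp only [dotProduct, mulVec, Finset.mul_sum]
        exact Finset.sum_congr rfl fun i _ => Finset.sum_congr rfl fun j _ => by ring
    _ ≤ ∑ i, ∑ j, A i j * ((q i * y j + q j * y i) / 2) := by
        gcongr with i _ j _
        · exact hA i j
        · exact mul_le_sq_div_mul_add_sq_div_mul (hy i) (hy j) (hzy i) (hzy j)
    _ = ∑ i, ∑ j, A i j * (q i * y j) := by
        simp only [mul_add, add_div, mul_div_assoc', Finset.sum_add_distrib]
        rw [Finset.sum_comm (f := fun i j => A i j * (q j * y i) / 2)]
        simp only [hAs.apply, ← Finset.sum_div]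
        ring
    _ = ∑ i, q i * (A *ᵥ y) i := by
        simp only [mulVec, dotProduct, Finset.mul_sum]
        exact Finset.sum_congr rfl fun i _ => Finset.sum_congr rfl fun j _ => by ring
    _ = μ * (z ⬝ᵥ z) := by
        simp only [dotProduct, Finset.mul_sum]
        refine Finset.sum_congr rfl fun i _ => ?_
        by_cases hzi : z i = 0
        · simp [q, hzi]
        · rw [hAy i (hz i hzi), mul_left_comm, hq i]
          ring

section Pareto

variable {n : ℕ} {A : Matrix (Fin n) (Fin n) ℝ} {μ : ℝ}

theorem isParetoEigenvalue_of_mulVec_eq (hA : ∀ i j, 0 ≤ A i j) {x : Fin n → ℝ}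
    (hx : ∀ i, 0 ≤ x i) (hx0 : x ≠ 0) (hAx : ∀ i, x i ≠ 0 → (A *ᵥ x) i = μ * x i) :
    IsParetoEigenvalue A μ := by
  have hxx : x ⬝ᵥ A *ᵥ x = μ * (x ⬝ᵥ x) := by
    simp only [dotProduct, Finset.mul_sum]
    refine Finset.sum_congr rfl fun i _ => ?_
    by_cases hi : x i = 0
    · simp [hi]
    · rw [hAx i hi]
      ring
  refine ⟨x, hx0, hx, fun i => ?_, ?_⟩
  · by_cases hi : x i = 0
    · rw [hi, mul_zero, mulVec, dotProduct]
      exact Finset.sum_nonneg fun j _ => mul_nonneg (hA i j) (hx j)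
    · rw [hAx i hi]
  · have hpos : 0 < x ⬝ᵥ x := dotProduct_self_star_pos_iff.mpr hx0
    rw [hxx, mul_div_cancel_right₀ _ hpos.ne']

theorem isParetoEigenvalue_of_submatrix_mulVec {κ : Type*} [Fintype κ] [Nonempty κ]
    (hA : ∀ i j, 0 ≤ A i j) {v : κ → Fin n} (hv : Injective v) {c : κ → ℝ}
    (hc : ∀ j, 0 < c j) (hAc : A.submatrix v v *ᵥ c = μ • c) : IsParetoEigenvalue A μ := by
  set x := extend v c (0 : Fin n → ℝ)
  have hx : Function.support x ⊆ Set.range v := support_extend_zero_subset c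
  have hxv : x ∘ v = c := extend_zero_comp hv c
  refine isParetoEigenvalue_of_mulVec_eq (x := x) hA (fun i => ?_) (fun h0 => ?_) fun i hi => ?_
  · by_cases hi : x i = 0
    · exact hi.ge
    · obtain ⟨j, rfl⟩ := hx hi
      exact (congrFun hxv j).trans_ge (hc j).le
  · obtain ⟨j⟩ := ‹Nonempty κ›
    have := congrFun hxv j
    simp only [h0, Function.comp_apply, Pi.zero_apply] at this
    exact (hc j).ne this
  · obtain ⟨j, rfl⟩ := hx hi
    rw [mulVec_apply_eq_submatrix_mulVec hv A hx, hxv, hAc]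
    simp [← congrFun hxv j]

namespace IsParetoEigenpair

variable {x : Fin n → ℝ}

theorem dotProduct_self_pos (h : IsParetoEigenpair A μ x) : 0 < x ⬝ᵥ x :=
  dotProduct_self_star_pos_iff.mpr h.1

theorem dotProduct_mulVec_eq (h : IsParetoEigenpair A μ x) : x ⬝ᵥ A *ᵥ x = μ * (x ⬝ᵥ x) := by
  rw [h.2.2.2, div_mul_cancel₀ _ h.dotProduct_self_pos.ne']

/-- Complementary slackness: `∑ xᵢ ((Ax)ᵢ - μ xᵢ) = 0` is a sum of nonnegative terms. -/
theorem mulVec_eq (h : IsParetoEigenpair A μ x) {i : Fin n} (hi : x i ≠ 0) :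
    (A *ᵥ x) i = μ * x i := by
  have hsum : ∑ j, x j * ((A *ᵥ x) j - μ * x j) = 0 := by
    simp only [mul_sub, Finset.sum_sub_distrib]
    rw [← dotProduct, h.dotProduct_mulVec_eq, dotProduct, Finset.mul_sum]
    simp only [mul_left_comm, sub_self]
  have hterm := (Finset.sum_eq_zero_iff_of_nonneg fun j _ =>
    mul_nonneg (h.2.1 j) (sub_nonneg.mpr (h.2.2.1 j))).mp hsum i (Finset.mem_univ i)
  linarith [(mul_eq_zero.mp hterm).resolve_left hi]

theorem add_one_eq_card_support (h : IsParetoEigenpair A μ x) (hdiag : ∀ i, A i i = 0)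
    (hone : ∀ i j, x i ≠ 0 → x j ≠ 0 → i ≠ j → A i j = 1) :
    μ + 1 = (Finset.univ.filter fun i => x i ≠ 0).card := by
  set F := Finset.univ.filter fun i => x i ≠ 0
  set S := ∑ j, x j
  have hrow : ∀ i ∈ F, (μ + 1) * x i = S := fun i hi => by
    have hi : x i ≠ 0 := (Finset.mem_filter.mp hi).2
    have hterm : ∀ j, A i j * x j = x j - if j = i then x i else 0 := fun j => by
      by_cases hj : x j = 0
      · by_cases hji : j = i <;> simp_all
      by_cases hji : j = i
      · simp [hji, hdiag]
      · simp [hone i j hi hj (Ne.symm hji), hji]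
    have := h.mulVec_eq hi
    simp only [mulVec, dotProduct, hterm, Finset.sum_sub_distrib, Finset.sum_ite_eq',
      Finset.mem_univ, if_true] at this
    linarith
  have hFS : ∑ i ∈ F, x i = S := Finset.sum_filter_ne_zero (s := Finset.univ) (f := x)
  have hS : 0 < S := by
    obtain ⟨i, hi⟩ := Function.ne_iff.mp h.1
    exact Finset.sum_pos' (fun j _ => h.2.1 j) ⟨i, Finset.mem_univ i, (h.2.1 i).lt_of_ne' hi⟩
  have := Finset.sum_congr rfl hrow
  rw [← Finset.mul_sum, hFS, Finset.sum_const, nsmul_eq_mul] at this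
  exact mul_right_cancel₀ hS.ne' this

variable {κ : Type*} [Fintype κ] {v : κ → Fin n}

theorem sum_le_mul_card (h : IsParetoEigenpair A μ x) (hA : ∀ i j, 0 ≤ A i j) (hAs : A.IsSymm)
    (hv : Injective v) (hxv : ∀ j, x (v j) ≠ 0) {M : Matrix κ κ ℝ}
    (hM : ∀ j l, M j l ≤ A (v j) (v l)) : ∑ j, ∑ l, M j l ≤ μ * Fintype.card κ := by
  set z := extend v (1 : κ → ℝ) (0 : Fin n → ℝ)
  have hz : Function.support z ⊆ Set.range v := support_extend_zero_subset 1
  have hray : z ⬝ᵥ A *ᵥ z ≤ μ * (z ⬝ᵥ z) :=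
    dotProduct_mulVec_le_of_mulVec_eq hA hAs h.2.1 (fun _ => h.mulVec_eq) fun i hi => by
      obtain ⟨j, rfl⟩ := hz hi
      exact hxv j
  rw [dotProduct_mulVec_eq_submatrix hv A hz hz, dotProduct_self_eq_comp hv hz,
    extend_zero_comp hv] at hray
  calc ∑ j, ∑ l, M j l ≤ ∑ j, ∑ l, A (v j) (v l) := by gcongr with j _ l _; exact hM j l
    _ = 1 ⬝ᵥ A.submatrix v v *ᵥ 1 := by simp [dotProduct, mulVec]
    _ ≤ μ * Fintype.card κ := by simpa using hray

theorem le_of_le_submatrix (h : IsParetoEigenpair A μ x) (hv : Injective v)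
    (hx : Function.support x ⊆ Set.range v) {B : Matrix κ κ ℝ} (hB : ∀ j l, 0 ≤ B j l)
    (hBs : B.IsSymm) {w : κ → ℝ} {ν : ℝ} (hw : ∀ j, 0 < w j) (hBw : B *ᵥ w = ν • w)
    (hAB : ∀ j l, x (v j) ≠ 0 → x (v l) ≠ 0 → A (v j) (v l) ≤ B j l) : μ ≤ ν := by
  set y := x ∘ v
  have hpos : 0 < y ⬝ᵥ y := dotProduct_self_eq_comp hv hx ▸ h.dotProduct_self_pos
  have hAy : μ * (y ⬝ᵥ y) = y ⬝ᵥ A.submatrix v v *ᵥ y := by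
    rw [← dotProduct_self_eq_comp hv hx, ← dotProduct_mulVec_eq_submatrix hv A hx hx,
      h.dotProduct_mulVec_eq]
  have hle : y ⬝ᵥ A.submatrix v v *ᵥ y ≤ y ⬝ᵥ B *ᵥ y := by
    simp only [dotProduct, mulVec, Finset.mul_sum]
    refine Finset.sum_le_sum fun j _ => Finset.sum_le_sum fun l _ => ?_
    by_cases hj : y j = 0
    · simp [hj]
    by_cases hl : y l = 0
    · simp [hl]
    exact mul_le_mul_of_nonneg_left
      (mul_le_mul_of_nonneg_right (hAB j l hj hl) (h.2.1 (v l))) (h.2.1 (v j))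
  have hray : y ⬝ᵥ B *ᵥ y ≤ ν * (y ⬝ᵥ y) :=
    dotProduct_mulVec_le_of_mulVec_eq hB hBs (fun j => (hw j).le)
      (fun j _ => congrFun hBw j) fun j _ => (hw j).ne'
  exact le_of_mul_le_mul_right (hAy ▸ hle.trans hray) hpos

end IsParetoEigenpair

end Pareto

namespace IsKthSmallest

variable {S : Set ℝ} {k : ℕ} {a : ℝ}

theorem finite_lt (h : IsKthSmallest S k a) (hk : 2 ≤ k) : {x ∈ S | x < a}.Finite :=
  Set.finite_of_ncard_pos (by rw [h.2]; omega)

theorem mem_of_lt (h : IsKthSmallest S k a) (hk : 2 ≤ k) {T : Set ℝ}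
    (hT : T ⊆ {x ∈ S | x < a}) (hTk : T.ncard = k - 1) {x : ℝ} (hx : x ∈ S) (hxa : x < a) :
    x ∈ T := by
  rw [Set.eq_of_subset_of_ncard_le hT (by rw [h.2, hTk]) (h.finite_lt hk)]
  exact ⟨hx, hxa⟩

theorem succ (h : IsKthSmallest S k a) (hk : 2 ≤ k) {b : ℝ} (hb : b ∈ S) (hab : a < b)
    (hgap : ∀ x ∈ S, a < x → b ≤ x) : IsKthSmallest S (k + 1) b := by
  have hlt : {x ∈ S | x < b} = insert a {x ∈ S | x < a} := by
    ext x
    simp only [Set.mem_ofPred_eq, Set.mem_insert_iff]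
    constructor
    · rintro ⟨hx, hxb⟩
      rcases lt_trichotomy x a with hxa | rfl | hxa
      exacts [Or.inr ⟨hx, hxa⟩, Or.inl rfl, absurd (hgap x hx hxa) hxb.not_ge]
    · rintro (rfl | ⟨hx, hxa⟩)
      exacts [⟨h.1, hab⟩, ⟨hx, hxa.trans hab⟩]
  refine ⟨hb, ?_⟩
  rw [hlt, Set.ncard_insert_of_notMem (fun ha => lt_irrefl a ha.2) (h.finite_lt hk), h.2]
  omega

end IsKthSmallest

theorem Finset.exists_nodup_of_card_le_four {α : Type*} [Fintype α] [DecidableEq α]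
    (hα : 4 ≤ Fintype.card α) {F : Finset α} (hF : F.card ≤ 4) {p q : α} (hp : p ∈ F)
    (hq : q ∈ F) (hpq : p ≠ q) :
    ∃ r s, [p, q, r, s].Nodup ∧ ∀ i ∈ F, i = p ∨ i = q ∨ i = r ∨ i = s := by
  have hpq2 : ({p, q} : Finset α).card = 2 := Finset.card_pair hpq
  obtain ⟨T, hFT, hTU, hT⟩ := Finset.exists_subsuperset_card_eq
    (Finset.sdiff_subset_sdiff (Finset.subset_univ F) (subset_refl {p, q})) (n := 2)
    (by rw [Finset.card_sdiff_of_subset (by simp [Finset.insert_subset_iff, hp, hq])]; omega)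
    (by rw [Finset.card_sdiff_of_subset (Finset.subset_univ _), Finset.card_univ]; omega)
  obtain ⟨r, s, hrs, rfl⟩ := Finset.card_eq_two.mp hT
  have hr : r ∉ ({p, q} : Finset α) := (Finset.mem_sdiff.mp (hTU (by simp))).2
  have hs : s ∉ ({p, q} : Finset α) := (Finset.mem_sdiff.mp (hTU (by simp))).2
  refine ⟨r, s, by simp_all [eq_comm], fun i hi => ?_⟩
  by_cases hi' : i ∈ ({p, q} : Finset α)
  · simp only [Finset.mem_insert, Finset.mem_singleton] at hi'
    tauto
  · have := hFT (Finset.mem_sdiff.mpr ⟨hi, hi'⟩)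
    simp only [Finset.mem_insert, Finset.mem_singleton] at this
    tauto

theorem SimpleGraph.Connected.exists_dist_eq_of_le {V : Type*} {G : SimpleGraph V}
    (hG : G.Connected) {u w : V} {k : ℕ} (hk : k ≤ G.dist u w) :
    ∃ v, G.dist u v = k ∧ G.dist v w = G.dist u w - k := by
  obtain ⟨p, hp⟩ := hG.exists_walk_length_eq_dist u w
  have h1 : G.dist u (p.getVert k) ≤ k :=
    (dist_le (p.take k)).trans (by simp [Walk.take_length])
  have h2 : G.dist (p.getVert k) w ≤ G.dist u w - k := by
    simpa [Walk.drop_length, hp] using dist_le (p.drop k)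
  have h3 : G.dist u w ≤ G.dist u (p.getVert k) + G.dist (p.getVert k) w := hG.dist_triangle
  exact ⟨p.getVert k, by omega, by omega⟩

section DistMatrix

variable {n : ℕ} {G : SimpleGraph (Fin n)}

theorem distMatrix_nonneg (G : SimpleGraph (Fin n)) (i j : Fin n) : 0 ≤ distMatrix G i j :=
  Nat.cast_nonneg _

theorem distMatrix_isSymm (G : SimpleGraph (Fin n)) : (distMatrix G).IsSymm :=
  Matrix.IsSymm.ext fun i j => by simp [distMatrix, dist_comm]

theorem mem_distParetoSet_of_sum_eq {κ : Type*} [Fintype κ] [Nonempty κ] {v : κ → Fin n}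
    (hv : Injective v) {c : κ → ℝ} (hc : ∀ j, 0 < c j) {μ : ℝ}
    (hsum : ∀ j, ∑ l, (G.dist (v j) (v l) : ℝ) * c l = μ * c j) : μ ∈ distParetoSet G :=
  isParetoEigenvalue_of_submatrix_mulVec (distMatrix_nonneg G) hv hc (funext hsum)

/-- The all-ones vector is an eigenvector, for `ρ`, of the distance matrix on the distinct
vertices `v`. -/
def IsTransmissionRegular {κ : Type*} [Fintype κ] (G : SimpleGraph (Fin n)) (v : κ → Fin n)
    (ρ : ℝ) : Prop :=
  Injective v ∧ ∀ j, ∑ l, (G.dist (v j) (v l) : ℝ) = ρ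

theorem IsTransmissionRegular.mem_distParetoSet {κ : Type*} [Fintype κ] [Nonempty κ]
    {v : κ → Fin n} {ρ : ℝ} (h : IsTransmissionRegular G v ρ) : ρ ∈ distParetoSet G :=
  mem_distParetoSet_of_sum_eq h.1 (c := 1) (fun _ => one_pos) (by simpa using h.2)

theorem IsParetoEigenpair.le_of_isTransmissionRegular {μ : ℝ} {x : Fin n → ℝ}
    (h : IsParetoEigenpair (distMatrix G) μ x) {κ : Type*} [Fintype κ] [Nonempty κ]
    {v : κ → Fin n} {ρ : ℝ} (hv : IsTransmissionRegular G v ρ) (hxv : ∀ j, x (v j) ≠ 0) :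
    ρ ≤ μ := by
  have := h.sum_le_mul_card (distMatrix_nonneg G) (distMatrix_isSymm G) hv.1 hxv
    (M := (distMatrix G).submatrix v v) fun _ _ => le_rfl
  simp only [submatrix_apply, distMatrix, hv.2, Finset.sum_const, Finset.card_univ,
    nsmul_eq_mul] at this
  exact le_of_mul_le_mul_left (by linarith) (Nat.cast_pos.mpr Fintype.card_pos)

variable {a b c d : Fin n}

theorem isTransmissionRegular_singleton (a : Fin n) : IsTransmissionRegular G ![a] 0 :=
  ⟨injective_of_subsingleton _, by simp⟩

theorem isTransmissionRegular_pair (hab : a ≠ b) :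
    IsTransmissionRegular G ![a, b] (G.dist a b) :=
  ⟨List.nodup_ofFn.mp (by simp [hab]), by intro j; fin_cases j <;> simp [dist_comm]⟩

theorem isTransmissionRegular_of_dist_eq_two (hab : G.dist a b = 2) (hac : G.dist a c = 2)
    (hbc : G.dist b c = 2) : IsTransmissionRegular G ![a, b, c] 4 :=
  ⟨List.nodup_ofFn.mp (by simp; and_intros <;> rintro rfl <;> simp_all),
    by intro j; fin_cases j <;> simp [Fin.sum_univ_three, dist_comm, *] <;> norm_num⟩

theorem isTransmissionRegular_square (hab : G.dist a b = 2) (hac : G.dist a c = 1)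
    (had : G.dist a d = 1) (hbc : G.dist b c = 1) (hbd : G.dist b d = 1)
    (hcd : G.dist c d = 2) : IsTransmissionRegular G ![a, b, c, d] 4 :=
  ⟨List.nodup_ofFn.mp (by simp; and_intros <;> rintro rfl <;> simp_all),
    by intro j; fin_cases j <;> simp [Fin.sum_univ_four, dist_comm, *] <;> norm_num⟩

theorem isTransmissionRegular_of_dist_eq_one (hab : G.dist a b = 1) (hac : G.dist a c = 1)
    (had : G.dist a d = 1) (hbc : G.dist b c = 1) (hbd : G.dist b d = 1)
    (hcd : G.dist c d = 1) : IsTransmissionRegular G ![a, b, c, d] 3 :=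
  ⟨List.nodup_ofFn.mp (by simp; and_intros <;> rintro rfl <;> simp_all),
    by intro j; fin_cases j <;> simp [Fin.sum_univ_four, dist_comm, *] <;> norm_num⟩

theorem one_add_sqrt_three_mem_distParetoSet_s17 (hab : G.dist a b = 1) (hac : G.dist a c = 2)
    (hbc : G.dist b c = 1) : 1 + √3 ∈ distParetoSet G := by
  have h3 : √3 * √3 = 3 := Real.mul_self_sqrt (by norm_num)
  have h3' : 1 < √3 := by nlinarith [Real.sqrt_nonneg 3]
  refine mem_distParetoSet_of_sum_eq (v := ![a, b, c]) (c := ![1, √3 - 1, 1])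
    (List.nodup_ofFn.mp (by simp; and_intros <;> rintro rfl <;> simp_all)) ?_ ?_
  · intro j; fin_cases j <;> simp [h3']
  · intro j; fin_cases j <;> simp [Fin.sum_univ_three, dist_comm, *] <;> linarith

theorem one_add_sqrt_thirtyThree_div_two_mem_distParetoSet (hab : G.dist a b = 1)
    (hac : G.dist a c = 2) (hbc : G.dist b c = 2) : (1 + √33) / 2 ∈ distParetoSet G := by
  have h33 : √33 * √33 = 33 := Real.mul_self_sqrt (by norm_num)
  have h33' : 1 < √33 := by nlinarith [Real.sqrt_nonneg 33]
  refine mem_distParetoSet_of_sum_eq (v := ![a, b, c]) (c := ![1, 1, (√33 - 1) / 4])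
    (List.nodup_ofFn.mp (by simp; and_intros <;> rintro rfl <;> simp_all)) ?_ ?_
  · intro j; fin_cases j <;> simp [h33']
  · intro j; fin_cases j <;> simp [Fin.sum_univ_three, dist_comm, *] <;> linarith

namespace IsParetoEigenpair

variable {μ : ℝ} {x : Fin n → ℝ}

theorem card_support_sub_one_le (h : IsParetoEigenpair (distMatrix G) μ x)
    (hG : G.Connected) : ((Finset.univ.filter fun i => x i ≠ 0).card : ℝ) - 1 ≤ μ := by
  set F := Finset.univ.filter fun i => x i ≠ 0
  set v := F.orderEmbOfFin rfl
  have hsum := h.sum_le_mul_card (distMatrix_nonneg G) (distMatrix_isSymm G) v.injective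
    (fun j => (Finset.mem_filter.mp (F.orderEmbOfFin_mem rfl j)).2)
    (M := fun j l => if j = l then 0 else 1) fun j l => by
      split_ifs with hjl
      · exact distMatrix_nonneg G _ _
      · exact Nat.one_le_cast.mpr (hG.pos_dist_of_ne (v.injective.ne hjl))
  have hcard : ∑ j : Fin F.card, ∑ l : Fin F.card, (if j = l then (0 : ℝ) else 1)
      = F.card * (F.card - 1) := by
    rcases F.card with _ | k <;>
      simp [Finset.sum_ite, ← ne_eq, Finset.filter_ne, Finset.card_erase_of_mem]
  have hpos : (0 : ℝ) < F.card := by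
    obtain ⟨i, hi⟩ := Function.ne_iff.mp h.1
    exact Nat.cast_pos.mpr (Finset.card_pos.mpr ⟨i, by simpa [F] using hi⟩)
  rw [hcard, Fintype.card_fin, mul_comm μ] at hsum
  exact le_of_mul_le_mul_left hsum hpos

/-- The distance matrix of `K₄ - e` (missing edge `pq`) has Perron root `(3 + √17) / 2`, with
Perron vector `(1, 1, t, t)`, `t = (√17 - 1) / 4`. -/
theorem le_of_support_subset_four (h : IsParetoEigenpair (distMatrix G) μ x)
    {p q r s : Fin n} (hpqrs : [p, q, r, s].Nodup)
    (hsupp : ∀ i, x i ≠ 0 → i = p ∨ i = q ∨ i = r ∨ i = s) (hpq : G.dist p q ≤ 2)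
    (hnear : ∀ i j, x i ≠ 0 → x j ≠ 0 → i ≠ j → i ≠ p → i ≠ q → G.dist i j = 1) :
    μ ≤ (3 + √17) / 2 := by
  have h17 : √17 * √17 = 17 := Real.mul_self_sqrt (by norm_num)
  have h17' : 1 < √17 := by nlinarith [Real.sqrt_nonneg 17]
  refine h.le_of_le_submatrix (v := ![p, q, r, s])
    (B := !![0, 2, 1, 1; 2, 0, 1, 1; 1, 1, 0, 1; 1, 1, 1, 0])
    (w := ![1, 1, (√17 - 1) / 4, (√17 - 1) / 4])
    (List.nodup_ofFn.mp (by simpa using hpqrs)) ?_ ?_ ?_ ?_ ?_ ?_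
  · intro i hi
    rcases hsupp i hi with rfl | rfl | rfl | rfl
    exacts [⟨0, rfl⟩, ⟨1, rfl⟩, ⟨2, rfl⟩, ⟨3, rfl⟩]
  · intro j l; fin_cases j <;> fin_cases l <;> norm_num
  · exact Matrix.IsSymm.ext fun j l => by fin_cases j <;> fin_cases l <;> rfl
  · intro j; fin_cases j <;> simp [h17']
  · ext j; fin_cases j <;> simp [mulVec, dotProduct, Fin.sum_univ_four] <;> linarith
  · simp only [List.nodup_cons, List.mem_cons, not_or] at hpqrs
    obtain ⟨⟨hne_pq, hne_pr, hne_ps, -⟩, ⟨hne_qr, hne_qs, -⟩, ⟨hne_rs, -⟩, -⟩ := hpqrs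
    intro j l hj hl
    fin_cases j <;> fin_cases l <;> simp [distMatrix] at hj hl ⊢
    all_goals grind [SimpleGraph.dist_comm]

end IsParetoEigenpair

end DistMatrix

namespace SimpleGraph

variable {n : ℕ} {G : SimpleGraph (Fin n)}

theorem exists_dist_eq_two_of_irrational (hG : G.Connected) {μ : ℝ}
    (hμ : μ ∈ distParetoSet G) (hirr : Irrational μ) : ∃ u w, G.dist u w = 2 := by
  by_contra! hno
  have hone : ∀ i j, i ≠ j → G.dist i j = 1 := fun i j hij => by
    have := hG.pos_dist_of_ne hij
    by_contra
    obtain ⟨w, hw, -⟩ := hG.exists_dist_eq_of_le (u := i) (w := j) (k := 2) (by omega)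
    exact hno i w hw
  obtain ⟨x, h⟩ := hμ
  have hcard := h.add_one_eq_card_support (fun i => by simp [distMatrix])
    fun i j _ _ hij => by simp [distMatrix, hone i j hij]
  exact (hirr.add_natCast 1).ne_nat _ (by simpa using hcard)

theorem dist_le_two_of_three_notMem (hG : G.Connected) (h3 : (3 : ℝ) ∉ distParetoSet G)
    (a b : Fin n) : G.dist a b ≤ 2 := by
  by_contra! hab
  obtain ⟨c, hac, -⟩ := hG.exists_dist_eq_of_le (u := a) (w := b) (k := 3) hab
  exact h3 (by exact_mod_cast hac ▸
    (isTransmissionRegular_pair (G := G) (by rintro rfl; simp at hac)).mem_distParetoSet)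

theorem dist_eq_two_of_dist_eq_two (hG : G.Connected) (hdiam : ∀ a b, G.dist a b ≤ 2)
    (h33 : (1 + √33) / 2 ∉ distParetoSet G) {a b c : Fin n} (hab : G.dist a b = 2)
    (hac : G.dist a c = 2) (hbc : b ≠ c) : G.dist b c = 2 := by
  have := hdiam b c
  have := hG.pos_dist_of_ne hbc
  by_contra hbc'
  exact h33 (one_add_sqrt_thirtyThree_div_two_mem_distParetoSet (a := b) (b := c) (c := a)
    (by omega) (by rwa [dist_comm]) (by rwa [dist_comm]))

theorem eq_of_mem_distParetoSet_of_lt (hG : G.Connected)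
    (h5 : IsKthSmallest (distParetoSet G) 5 ((3 + √17) / 2)) {u w : Fin n}
    (huw : G.dist u w = 2) {μ : ℝ} (hμ : μ ∈ distParetoSet G) (hμA : μ < (3 + √17) / 2) :
    μ = 0 ∨ μ = 1 ∨ μ = 2 ∨ μ = 1 + √3 := by
  have h3 : 1 < √3 ∧ √3 < 2 := by
    constructor <;>
      nlinarith [Real.mul_self_sqrt (show (0 : ℝ) ≤ 3 by norm_num), Real.sqrt_nonneg 3]
  have h17 : 4 < √17 := by
    nlinarith [Real.mul_self_sqrt (show (0 : ℝ) ≤ 17 by norm_num), Real.sqrt_nonneg 17]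
  obtain ⟨m, hum, hmw⟩ := hG.exists_dist_eq_of_le (u := u) (w := w) (k := 1) (by omega)
  rw [huw] at hmw
  have hpair : ∀ {a b : Fin n} {k : ℕ}, G.dist a b = k + 1 → (k + 1 : ℝ) ∈ distParetoSet G :=
    fun {a b k} hab => by
      simpa [hab] using (isTransmissionRegular_pair (G := G)
        (by rintro rfl; simp at hab : a ≠ b)).mem_distParetoSet
  refine h5.mem_of_lt (by norm_num) (T := {0, 1, 2, 1 + √3}) ?_ ?_ hμ hμA
  · rintro t (rfl | rfl | rfl | rfl)
    · exact ⟨(isTransmissionRegular_singleton u).mem_distParetoSet, by linarith⟩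
    · exact ⟨by simpa using hpair (k := 0) hum, by linarith⟩
    · exact ⟨by simpa [one_add_one_eq_two] using hpair (k := 1) huw, by linarith⟩
    · exact ⟨one_add_sqrt_three_mem_distParetoSet_s17 hum huw hmw, by linarith⟩
  · rw [Set.ncard_insert_of_notMem, Set.ncard_insert_of_notMem, Set.ncard_pair]
    all_goals
      simp only [Set.mem_insert_iff, Set.mem_singleton_iff, not_or, ne_eq]
      and_intros <;> intro h <;> linarith

theorem four_mem_distParetoSet (hG : G.Connected) (hn : 5 ≤ n)
    (hdiam : ∀ a b, G.dist a b ≤ 2)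
    (hfar : ∀ a b c, G.dist a b = 2 → G.dist a c = 2 → b ≠ c → G.dist b c = 2)
    (h3 : (3 : ℝ) ∉ distParetoSet G) {u w : Fin n} (huw : G.dist u w = 2) :
    (4 : ℝ) ∈ distParetoSet G := by
  by_cases htri : ∃ z, G.dist u z = 2 ∧ w ≠ z
  · obtain ⟨z, huz, hwz⟩ := htri
    exact (isTransmissionRegular_of_dist_eq_two huw huz (hfar u w z huw huz hwz)).mem_distParetoSet
  push Not at htri
  have hnear : ∀ z, z ≠ u → z ≠ w → G.dist u z = 1 ∧ G.dist w z = 1 := fun z hzu hzw => by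
    have := hG.pos_dist_of_ne hzu.symm
    have := hG.pos_dist_of_ne hzw.symm
    have huz : G.dist u z ≠ 2 := fun huz => hzw (htri z huz).symm
    have hwz : G.dist w z ≠ 2 := fun hwz => huz (hfar w u z (by rwa [dist_comm]) hwz hzu.symm)
    have := hdiam u z
    have := hdiam w z
    omega
  by_cases hsq : ∃ c d, c ≠ u ∧ c ≠ w ∧ d ≠ u ∧ d ≠ w ∧ G.dist c d = 2
  · obtain ⟨c, d, hcu, hcw, hdu, hdw, hcd⟩ := hsq
    exact (isTransmissionRegular_square huw (hnear c hcu hcw).1 (hnear d hdu hdw).1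
      (hnear c hcu hcw).2 (hnear d hdu hdw).2 hcd).mem_distParetoSet
  push Not at hsq
  have hcard : 2 < (Finset.univ \ {u, w} : Finset (Fin n)).card := by
    rw [Finset.card_sdiff_of_subset (Finset.subset_univ _), Finset.card_univ, Fintype.card_fin]
    have := Finset.card_le_two (a := u) (b := w)
    omega
  obtain ⟨a, ha, b, hb, c, hc, hab, hac, hbc⟩ := Finset.two_lt_card.mp hcard
  simp only [Finset.mem_sdiff, Finset.mem_univ, Finset.mem_insert, Finset.mem_singleton,
    true_and, not_or] at ha hb hc
  have hadj : ∀ y z, y ≠ u → y ≠ w → z ≠ u → z ≠ w → y ≠ z → G.dist y z = 1 :=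
    fun y z hyu hyw hzu hzw hyz => by
      have := hdiam y z
      have := hG.pos_dist_of_ne hyz
      have := hsq y z hyu hyw hzu hzw
      omega
  exact absurd (isTransmissionRegular_of_dist_eq_one (hnear a ha.1 ha.2).1 (hnear b hb.1 hb.2).1
    (hnear c hc.1 hc.2).1 (hadj a b ha.1 ha.2 hb.1 hb.2 hab) (hadj a c ha.1 ha.2 hc.1 hc.2 hac)
    (hadj b c hb.1 hb.2 hc.1 hc.2 hbc)).mem_distParetoSet h3

theorem dist_eq_one_of_isParetoEigenpair (hG : G.Connected) (hdiam : ∀ a b, G.dist a b ≤ 2)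
    (hfar : ∀ a b c, G.dist a b = 2 → G.dist a c = 2 → b ≠ c → G.dist b c = 2)
    {μ : ℝ} {x : Fin n → ℝ} (h : IsParetoEigenpair (distMatrix G) μ x) (hμ : μ < 4)
    {p q : Fin n} (hp : x p ≠ 0) (hq : x q ≠ 0) (hpq : G.dist p q = 2) {i j : Fin n}
    (hi : x i ≠ 0) (hj : x j ≠ 0) (hij : i ≠ j) (hip : i ≠ p) (hiq : i ≠ q) :
    G.dist i j = 1 := by
  have hone : ∀ a b, a ≠ b → G.dist a b ≠ 2 → G.dist a b = 1 := fun a b hab h2 => by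
    have := hdiam a b
    have := hG.pos_dist_of_ne hab
    omega
  have hnear : ∀ r, x r ≠ 0 → r ≠ p → r ≠ q → G.dist p r = 1 ∧ G.dist q r = 1 :=
    fun r hr hrp hrq => by
      have htri : ¬(G.dist p r = 2 ∧ G.dist q r = 2) := fun ⟨hpr, hqr⟩ =>
        hμ.not_ge (h.le_of_isTransmissionRegular
          (isTransmissionRegular_of_dist_eq_two hpq hpr hqr) (by intro j; fin_cases j <;> simpa))
      have hpr : G.dist p r ≠ 2 := fun hpr => htri ⟨hpr, hfar p q r hpq hpr hrq.symm⟩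
      have hqr : G.dist q r ≠ 2 := fun hqr =>
        htri ⟨hfar q p r (by rwa [dist_comm]) hqr hrp.symm, hqr⟩
      exact ⟨hone p r hrp.symm hpr, hone q r hrq.symm hqr⟩
  by_cases hjp : j = p
  · subst hjp
    rw [dist_comm]
    exact (hnear i hi hip hiq).1
  by_cases hjq : j = q
  · subst hjq
    rw [dist_comm]
    exact (hnear i hi hip hiq).2
  refine hone i j hij fun hij2 => hμ.not_ge (h.le_of_isTransmissionRegular
    (isTransmissionRegular_square hpq (hnear i hi hip hiq).1 (hnear j hj hjp hjq).1
      (hnear i hi hip hiq).2 (hnear j hj hjp hjq).2 hij2) ?_)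
  intro k
  fin_cases k <;> simpa

theorem four_le_of_mem_distParetoSet (hG : G.Connected) (hn : 4 ≤ n)
    (hdiam : ∀ a b, G.dist a b ≤ 2)
    (hfar : ∀ a b c, G.dist a b = 2 → G.dist a c = 2 → b ≠ c → G.dist b c = 2)
    {μ : ℝ} (hμ : μ ∈ distParetoSet G) (hAμ : (3 + √17) / 2 < μ) : 4 ≤ μ := by
  obtain ⟨x, h⟩ := hμ
  by_contra! hμ4
  have h17 : 3 < √17 := by
    nlinarith [Real.mul_self_sqrt (show (0 : ℝ) ≤ 17 by norm_num), Real.sqrt_nonneg 17]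
  set F := Finset.univ.filter fun i => x i ≠ 0
  have hmemF : ∀ {i}, i ∈ F ↔ x i ≠ 0 := by simp [F]
  have hF : F.card ≤ 4 := by
    have := h.card_support_sub_one_le hG
    by_contra! hF
    have : (5 : ℝ) ≤ F.card := by exact_mod_cast hF
    linarith
  obtain ⟨p, q, hp, hq, hpq⟩ : ∃ p q, x p ≠ 0 ∧ x q ≠ 0 ∧ G.dist p q = 2 := by
    by_contra! hno
    have hcard := h.add_one_eq_card_support (fun i => by simp [distMatrix])
      fun i j hi hj hij => by
        have := hdiam i j
        have := hG.pos_dist_of_ne hij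
        have := hno i j hi hj
        simp [distMatrix, show G.dist i j = 1 by omega]
    have : (F.card : ℝ) ≤ 4 := by exact_mod_cast hF
    linarith
  obtain ⟨r, s, hpqrs, hsub⟩ := Finset.exists_nodup_of_card_le_four (by simpa using hn) hF
    (hmemF.mpr hp) (hmemF.mpr hq) (by rintro rfl; simp at hpq)
  exact hAμ.not_ge (h.le_of_support_subset_four hpqrs (fun i hi => hsub i (hmemF.mpr hi))
    (hdiam p q) fun i j hi hj hij hip hiq =>
      dist_eq_one_of_isParetoEigenpair hG hdiam hfar h hμ4 hp hq hpq hi hj hij hip hiq)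

end SimpleGraph

theorem stmt17 (n : ℕ) (hn : 5 ≤ n) (G : SimpleGraph (Fin n)) (hG : G.Connected)
    (h5 : IsKthSmallest (distParetoSet G) 5 ((3 + Real.sqrt 17) / 2)) :
    IsKthSmallest (distParetoSet G) 6 4 := by
  have h3 : 1 < √3 ∧ √3 < 2 := by
    constructor <;>
      nlinarith [Real.mul_self_sqrt (show (0 : ℝ) ≤ 3 by norm_num), Real.sqrt_nonneg 3]
  have h17 : 4 < √17 ∧ √17 < 5 := by
    constructor <;>
      nlinarith [Real.mul_self_sqrt (show (0 : ℝ) ≤ 17 by norm_num), Real.sqrt_nonneg 17]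
  have h33 : 5 < √33 ∧ √33 < 2 + √17 := by
    constructor <;> nlinarith [Real.mul_self_sqrt (show (0 : ℝ) ≤ 33 by norm_num),
      Real.sqrt_nonneg 33, Real.mul_self_sqrt (show (0 : ℝ) ≤ 17 by norm_num)]
  obtain ⟨u, w, huw⟩ := exists_dist_eq_two_of_irrational hG h5.1 <| by
    simpa using ((show Irrational √17 by norm_num).natCast_add 3).div_natCast two_ne_zero
  have hbelow := fun μ => eq_of_mem_distParetoSet_of_lt (μ := μ) hG h5 huw
  have hnot3 : (3 : ℝ) ∉ distParetoSet G := fun h => by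
    rcases hbelow _ h (by linarith) with h | h | h | h <;> linarith
  have hnot33 : (1 + √33) / 2 ∉ distParetoSet G := fun h => by
    rcases hbelow _ h (by linarith) with h | h | h | h <;> linarith
  have hdiam := dist_le_two_of_three_notMem hG hnot3
  have hfar : ∀ a b c, G.dist a b = 2 → G.dist a c = 2 → b ≠ c → G.dist b c = 2 :=
    fun _ _ _ => dist_eq_two_of_dist_eq_two hG hdiam hnot33
  exact h5.succ (by norm_num) (four_mem_distParetoSet hG hn hdiam hfar hnot3 huw)
    (by linarith) fun μ hμ hAμ => four_le_of_mem_distParetoSet hG (by omega) hdiam hfar hμ hAμ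
end
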